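/- arXiv:1905.12074 — 5 statements merged into one kernel-verified Lean document; each statement's English description precedes it below -/
import Mathlib

section
/- Let r ∈ ℕ, r ≥ 1, and let χ satisfy M_r(χ) < ∞ and the moment condition of order r with constant c. Then for every f ∈ C^r(ℝ²) and every w > 0, ‖G_w f − f‖_∞ ≤ (M_r(χ) / (r! · w^r)) · H, where H := Σ_{j=0}^{r} binom(r,j) · ‖∂^r f / ∂x^{r−j} ∂y^{j}‖_∞ is the sum of the sup-norms of all partial derivatives of f of total order r weighted by binomial coefficients. -/
open MeasureTheory Filter
open scoped ENNReal BigOperators Topology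

noncomputable def absMoment (χ : ℝ × ℝ → ℝ) (p₁ p₂ : ℕ) : ℝ≥0∞ :=
  ⨆ u : ℝ, ⨆ v : ℝ, ∑' k : ℤ, ∑' j : ℤ,
    ENNReal.ofReal (|χ (u - (k : ℝ), v - (j : ℝ))| * |u - (k : ℝ)| ^ p₁ * |v - (j : ℝ)| ^ p₂)

noncomputable def Mmoment (χ : ℝ × ℝ → ℝ) (η : ℕ) : ℝ≥0∞ :=
  ⨆ p : {p : ℕ × ℕ // p.1 + p.2 = η}, absMoment χ p.1.1 p.1.2

def PartitionOfUnity2 (χ : ℝ × ℝ → ℝ) : Prop :=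
  ∀ u v : ℝ, ∑' k : ℤ, ∑' j : ℤ, χ (u - (k : ℝ), v - (j : ℝ)) = 1

def MomentCondition (χ : ℝ × ℝ → ℝ) (r : ℕ) (c : ℝ) : Prop :=
  (∀ u v : ℝ, ∀ p₁ p₂ : ℕ, 1 ≤ p₁ + p₂ → p₁ + p₂ ≤ r - 1 →
    ∑' k : ℤ, ∑' j : ℤ, χ (u - (k : ℝ), v - (j : ℝ)) * (u - (k : ℝ)) ^ p₁ * (v - (j : ℝ)) ^ p₂ = 0) ∧
  (∀ u v : ℝ, ∀ p₁ p₂ : ℕ, p₁ + p₂ = r →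
    ∑' k : ℤ, ∑' j : ℤ, χ (u - (k : ℝ), v - (j : ℝ)) * (u - (k : ℝ)) ^ p₁ * (v - (j : ℝ)) ^ p₂ = c)

noncomputable def Gop (χ : ℝ × ℝ → ℝ) (w : ℝ) (f : ℝ × ℝ → ℝ) (x y : ℝ) : ℝ :=
  ∑' k : ℤ, ∑' j : ℤ, χ (w * x - (k : ℝ), w * y - (j : ℝ)) * f ((k : ℝ) / w, (j : ℝ) / w)

noncomputable def Sop (χ : ℝ × ℝ → ℝ) (w : ℝ) (f : ℝ × ℝ → ℝ) (x y : ℝ) : ℝ :=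
  ∑' k : ℤ, ∑' j : ℤ, χ (w * x - (k : ℝ), w * y - (j : ℝ)) *
    (w ^ 2 * ∫ u in ((k : ℝ) / w)..(((k : ℝ) + 1) / w),
      ∫ v in ((j : ℝ) / w)..(((j : ℝ) + 1) / w), f (u, v))

noncomputable def pX (f : ℝ × ℝ → ℝ) : ℝ × ℝ → ℝ := fun p => deriv (fun t => f (t, p.2)) p.1
noncomputable def pY (f : ℝ × ℝ → ℝ) : ℝ × ℝ → ℝ := fun p => deriv (fun t => f (p.1, t)) p.2
noncomputable def pd (f : ℝ × ℝ → ℝ) (i j : ℕ) : ℝ × ℝ → ℝ := pX^[i] (pY^[j] f)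

noncomputable def supNorm (g : ℝ × ℝ → ℝ) : ℝ := ⨆ p : ℝ × ℝ, |g p|

def mixedDiff (f : ℝ × ℝ → ℝ) (u v x y : ℝ) : ℝ := f (x, y) - f (x, v) - f (u, y) + f (u, v)

def BContinuous (f : ℝ × ℝ → ℝ) : Prop :=
  ∀ x₀ y₀ : ℝ, Tendsto (fun p : ℝ × ℝ => mixedDiff f x₀ y₀ p.1 p.2) (nhds (x₀, y₀)) (nhds 0)

noncomputable def omegaB (f : ℝ × ℝ → ℝ) (δ₁ δ₂ : ℝ) : ℝ :=
  sSup {t : ℝ | ∃ x y u v : ℝ, |x - u| < δ₁ ∧ |y - v| < δ₂ ∧ t = |mixedDiff f u v x y|}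

noncomputable def Kop (χ : ℝ × ℝ → ℝ) (w : ℝ) (f : ℝ × ℝ → ℝ) (x y : ℝ) : ℝ :=
  Sop χ w (fun p => f (p.1, y) + f (x, p.2) - f (p.1, p.2)) x y

/-! Expand `f (k / w, j / w)` by Taylor's formula of order `r` at `(x, y)`, along the segment
`t ↦ (x, y) + t • (k / w - x, j / w - y)`. Summed against the weights `χ (w x - k, w y - j)`, the
Taylor polynomial reproduces `f (x, y)`: the weights sum to `1` and the moments of orders
`1, …, r - 1` vanish. The Lagrange remainder is at most `1 / r!` times a binomial combination of
the sup-norms of the order-`r` partials with weights `|k / w - x| ^ p * |j / w - y| ^ q`, `p + q = r`,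
and the kernel sums of those weights are at most `M_r(χ) / w ^ r`. Finiteness of `M_r(χ)` also
makes all lower absolute moments summable, since only finitely many nodes `(k, j)` lie within
distance `1` of `(w x, w y)` in both coordinates. -/

section PartialDerivatives

variable {g : ℝ × ℝ → ℝ}

lemma pX_eq_fderiv (hg : Differentiable ℝ g) : pX g = fun p => fderiv ℝ g p (1, 0) := by
  funext p
  exact ((hg p).hasFDerivAt.comp_hasDerivAt p.1
    ((hasDerivAt_id p.1).prodMk (hasDerivAt_const p.1 p.2))).deriv

lemma pY_eq_fderiv (hg : Differentiable ℝ g) : pY g = fun p => fderiv ℝ g p (0, 1) := by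
  funext p
  exact ((hg p).hasFDerivAt.comp_hasDerivAt p.2
    ((hasDerivAt_const p.2 p.1).prodMk (hasDerivAt_id p.2))).deriv

lemma contDiff_pX {m : ℕ} (hg : ContDiff ℝ (m + 1 : ℕ) g) : ContDiff ℝ m (pX g) := by
  rw [pX_eq_fderiv (hg.differentiable (by simp))]
  exact (hg.fderiv_right (by norm_cast)).clm_apply contDiff_const

lemma contDiff_pY {m : ℕ} (hg : ContDiff ℝ (m + 1 : ℕ) g) : ContDiff ℝ m (pY g) := by
  rw [pY_eq_fderiv (hg.differentiable (by simp))]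
  exact (hg.fderiv_right (by norm_cast)).clm_apply contDiff_const

lemma contDiff_iterate_pX {m : ℕ} (i : ℕ) (hg : ContDiff ℝ (i + m : ℕ) g) :
    ContDiff ℝ m (pX^[i] g) := by
  induction i generalizing g with
  | zero => simpa using hg
  | succ i ih =>
    rw [Function.iterate_succ_apply]
    exact ih (contDiff_pX (by rwa [Nat.add_right_comm] at hg))

lemma contDiff_iterate_pY {m : ℕ} (j : ℕ) (hg : ContDiff ℝ (j + m : ℕ) g) :
    ContDiff ℝ m (pY^[j] g) := by
  induction j generalizing g with
  | zero => simpa using hg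
  | succ j ih =>
    rw [Function.iterate_succ_apply]
    exact ih (contDiff_pY (by rwa [Nat.add_right_comm] at hg))

lemma contDiff_pd {f : ℝ × ℝ → ℝ} {r i j m : ℕ} (hf : ContDiff ℝ r f) (h : i + j + m ≤ r) :
    ContDiff ℝ m (pd f i j) :=
  contDiff_iterate_pX i <| contDiff_iterate_pY j <| hf.of_le (by norm_cast; omega)

lemma pY_pX_comm (hg : ContDiff ℝ 2 g) : pY (pX g) = pX (pY g) := by
  have hg1 : Differentiable ℝ g := hg.differentiable (by simp)
  have hdg : Differentiable ℝ (fderiv ℝ g) :=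
    (hg.fderiv_right (m := 1) (by norm_num)).differentiable (by simp)
  have happ (v : ℝ × ℝ) : Differentiable ℝ (fun q => fderiv ℝ g q v) :=
    hdg.clm_apply (differentiable_const v)
  rw [pX_eq_fderiv hg1, pY_eq_fderiv hg1, pY_eq_fderiv (happ _), pX_eq_fderiv (happ _)]
  funext p
  rw [fderiv_clm_apply (hdg p) (differentiableAt_const _),
    fderiv_clm_apply (hdg p) (differentiableAt_const _)]
  simpa using ((hg.contDiffAt (x := p)).isSymmSndFDerivAt (by simp) (1, 0) (0, 1)).symm

lemma pY_iterate_pX {i : ℕ} (hg : ContDiff ℝ (i + 1 : ℕ) g) :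
    pY (pX^[i] g) = pX^[i] (pY g) := by
  induction i generalizing g with
  | zero => rfl
  | succ i ih =>
    rw [Function.iterate_succ_apply, Function.iterate_succ_apply, ih (contDiff_pX hg),
      pY_pX_comm (hg.of_le (by norm_cast; omega))]

end PartialDerivatives

section LineDerivatives

open Finset

variable {f : ℝ × ℝ → ℝ} {r : ℕ}

lemma pX_pd (i j : ℕ) : pX (pd f i j) = pd f (i + 1) j := by
  simp [pd, Function.iterate_succ_apply']

lemma pY_pd (hf : ContDiff ℝ r f) {i j : ℕ} (h : i + j + 1 ≤ r) :
    pY (pd f i j) = pd f i (j + 1) := by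
  rw [pd, pY_iterate_pX (contDiff_iterate_pY j (hf.of_le (by norm_cast; omega))), pd,
    Function.iterate_succ_apply' pY j f]

lemma hasDerivAt_pd_comp_line (hf : ContDiff ℝ r f) {i j : ℕ} (h : i + j + 1 ≤ r)
    (a b x y t : ℝ) :
    HasDerivAt (fun t => pd f i j (x + t * a, y + t * b))
      (a * pd f (i + 1) j (x + t * a, y + t * b) +
        b * pd f i (j + 1) (x + t * a, y + t * b)) t := by
  have hd : Differentiable ℝ (pd f i j) := (contDiff_pd (m := 1) hf h).differentiable (by simp)
  have hline : HasDerivAt (fun t : ℝ => (x + t * a, y + t * b)) (a, b) t :=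
    (((hasDerivAt_id t).mul_const a).const_add x).prodMk
      (((hasDerivAt_id t).mul_const b).const_add y) |>.congr_deriv (by simp)
  have hab : ((a, b) : ℝ × ℝ) = a • ((1 : ℝ), (0 : ℝ)) + b • ((0 : ℝ), (1 : ℝ)) := by simp
  have hv : fderiv ℝ (pd f i j) (x + t * a, y + t * b) (a, b) =
      a * pd f (i + 1) j (x + t * a, y + t * b) + b * pd f i (j + 1) (x + t * a, y + t * b) := by
    rw [hab, map_add, map_smul, map_smul, ← pX_pd i j, ← pY_pd hf h, pX_eq_fderiv hd,
      pY_eq_fderiv hd, smul_eq_mul, smul_eq_mul]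
  exact hv ▸ (hd _).hasFDerivAt.comp_hasDerivAt t hline

lemma iteratedDeriv_comp_line (hf : ContDiff ℝ r f) (a b x y : ℝ) {n : ℕ} (hn : n ≤ r) :
    iteratedDeriv n (fun t => f (x + t * a, y + t * b)) = fun t =>
      ∑ ij ∈ antidiagonal n, (n.choose ij.1 : ℝ) *
        (a ^ ij.1 * b ^ ij.2 * pd f ij.1 ij.2 (x + t * a, y + t * b)) := by
  induction n with
  | zero => simp [pd]
  | succ n ih =>
    rw [iteratedDeriv_succ, ih (by omega)]
    funext t
    set P : ℝ × ℝ := (x + t * a, y + t * b)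
    have hder : HasDerivAt
        (fun t => ∑ ij ∈ antidiagonal n, (n.choose ij.1 : ℝ) *
          (a ^ ij.1 * b ^ ij.2 * pd f ij.1 ij.2 (x + t * a, y + t * b)))
        (∑ ij ∈ antidiagonal n, (n.choose ij.1 : ℝ) *
          (a ^ ij.1 * b ^ ij.2 * (a * pd f (ij.1 + 1) ij.2 P + b * pd f ij.1 (ij.2 + 1) P))) t :=
      HasDerivAt.fun_sum fun ij hij =>
        have hij : ij.1 + ij.2 + 1 ≤ r := by rw [HasAntidiagonal.mem_antidiagonal.mp hij]; omega
        ((hasDerivAt_pd_comp_line hf hij a b x y t).const_mul _).const_mul _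
    rw [hder.deriv, sum_antidiagonal_choose_succ_mul (fun i j => a ^ i * b ^ j * pd f i j P),
      ← sum_add_distrib]
    refine sum_congr rfl fun ij hij => ?_
    rw [Nat.choose_symm_of_eq_add (HasAntidiagonal.mem_antidiagonal.mp hij).symm]
    ring

end LineDerivatives

open Set Nat in
lemma abs_sub_taylor_le {g : ℝ → ℝ} {r : ℕ} (hr : 1 ≤ r) (hg : ContDiff ℝ r g) {K : ℝ}
    (hK : ∀ t ∈ Icc (0 : ℝ) 1, |iteratedDeriv r g t| ≤ K) :
    |g 1 - ∑ n ∈ Finset.range r, iteratedDeriv n g 0 / n !| ≤ K / r ! := by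
  obtain ⟨n, rfl⟩ : ∃ n, r = n + 1 := ⟨r - 1, by omega⟩
  have hs : UniqueDiffOn ℝ (Icc (0 : ℝ) 1) := uniqueDiffOn_Icc one_pos
  have hwithin {m : ℕ} (hm : m ≤ n + 1) {t : ℝ} (ht : t ∈ Icc (0 : ℝ) 1) :
      iteratedDerivWithin m g (Icc 0 1) t = iteratedDeriv m g t :=
    iteratedDerivWithin_eq_iteratedDeriv hs (hg.contDiffAt.of_le (by exact_mod_cast hm)) ht
  have hu : uIcc (0 : ℝ) 1 = Icc 0 1 := uIcc_of_le zero_le_one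
  have hdiff : DifferentiableOn ℝ (iteratedDerivWithin n g (uIcc 0 1)) (uIoo 0 1) := by
    rw [hu, uIoo_of_le zero_le_one]
    refine ((hg.differentiable_iteratedDeriv n (by norm_cast; omega)).differentiableOn).congr
      fun t ht => hwithin (by omega) (Ioo_subset_Icc_self ht)
  obtain ⟨t, ht, hrem⟩ := taylor_mean_remainder_lagrange (n := n) zero_ne_one
    (hg.contDiffOn.of_le (by norm_cast; omega)) hdiff
  rw [uIoo_of_le zero_le_one] at ht
  rw [hu, taylor_within_apply] at hrem
  have htaylor : ∑ k ∈ Finset.range (n + 1), (((k ! : ℝ)⁻¹ * (1 - 0) ^ k) •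
      iteratedDerivWithin k g (Icc 0 1) 0) =
        ∑ k ∈ Finset.range (n + 1), iteratedDeriv k g 0 / k ! :=
    Finset.sum_congr rfl fun k hk => by
      rw [hwithin (by simp at hk; omega) (left_mem_Icc.mpr zero_le_one), smul_eq_mul]
      ring
  rw [← htaylor, hrem, hwithin le_rfl (Ioo_subset_Icc_self ht), abs_div, Nat.abs_cast]
  simp only [sub_zero, one_pow, mul_one]
  gcongr
  exact hK t (Ioo_subset_Icc_self ht)

section BivariateTaylor

open Finset

variable {f : ℝ × ℝ → ℝ} {r : ℕ}

noncomputable def bivariateTaylorPoly (f : ℝ × ℝ → ℝ) (r : ℕ) (x y a b : ℝ) : ℝ :=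
  ∑ n ∈ range r, ∑ ij ∈ antidiagonal n,
    (n.choose ij.1 : ℝ) / n.factorial * pd f ij.1 ij.2 (x, y) * (a ^ ij.1 * b ^ ij.2)

noncomputable def bivariateTaylorBound (f : ℝ × ℝ → ℝ) (r : ℕ) (a b : ℝ) : ℝ :=
  (∑ ij ∈ antidiagonal r, (r.choose ij.1 : ℝ) * supNorm (pd f ij.1 ij.2) *
    (|a| ^ ij.1 * |b| ^ ij.2)) / r.factorial

lemma abs_pd_le_supNorm {i j : ℕ} (h : ∃ C, ∀ z, |pd f i j z| ≤ C) (z : ℝ × ℝ) :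
    |pd f i j z| ≤ supNorm (pd f i j) := by
  obtain ⟨C, hC⟩ := h
  exact le_ciSup ⟨C, by rintro _ ⟨z, rfl⟩; exact hC z⟩ z

lemma abs_sub_bivariateTaylorPoly_le (hr : 1 ≤ r) (hf : ContDiff ℝ r f)
    (hbdd : ∀ i j, i + j = r → ∃ C, ∀ z, |pd f i j z| ≤ C) (x y a b : ℝ) :
    |f (x + a, y + b) - bivariateTaylorPoly f r x y a b| ≤ bivariateTaylorBound f r a b := by
  have hline : ContDiff ℝ r (fun t : ℝ => f (x + t * a, y + t * b)) := by fun_prop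
  have hK : ∀ t ∈ Set.Icc (0 : ℝ) 1,
      |iteratedDeriv r (fun t : ℝ => f (x + t * a, y + t * b)) t| ≤
        ∑ ij ∈ antidiagonal r, (r.choose ij.1 : ℝ) * supNorm (pd f ij.1 ij.2) *
          (|a| ^ ij.1 * |b| ^ ij.2) := by
    intro t _
    rw [iteratedDeriv_comp_line hf a b x y le_rfl]
    refine (abs_sum_le_sum_abs _ _).trans (sum_le_sum fun ij hij => ?_)
    have hsup := abs_pd_le_supNorm (hbdd ij.1 ij.2 (HasAntidiagonal.mem_antidiagonal.mp hij))
      (x + t * a, y + t * b)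
    rw [abs_mul, abs_mul, abs_mul, abs_pow, abs_pow, Nat.abs_cast]
    calc _ ≤ (r.choose ij.1 : ℝ) * (|a| ^ ij.1 * |b| ^ ij.2 * supNorm (pd f ij.1 ij.2)) := by
          gcongr
      _ = _ := by ring
  have htaylor := abs_sub_taylor_le hr hline hK
  simp only [one_mul] at htaylor
  rw [bivariateTaylorBound]
  convert htaylor using 3
  refine sum_congr rfl fun n hn => ?_
  rw [iteratedDeriv_comp_line hf a b x y (by simp at hn; omega), sum_div]
  refine sum_congr rfl fun ij _ => ?_
  simp only [zero_mul, add_zero]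
  ring

end BivariateTaylor

section WeightedSums

open Finset

variable {ι : Type*} {φ a b : ι → ℝ} {f : ℝ × ℝ → ℝ} {r : ℕ}

lemma hasSum_mul_bivariateTaylorPoly (hr : 1 ≤ r)
    (hmom : ∀ p q, p + q < r →
      HasSum (fun i => φ i * a i ^ p * b i ^ q) (if p + q = 0 then 1 else 0)) (x y : ℝ) :
    HasSum (fun i => φ i * bivariateTaylorPoly f r x y (a i) (b i)) (f (x, y)) := by
  have hsum := hasSum_sum fun n (hn : n ∈ range r) =>
    hasSum_sum fun ij (hij : ij ∈ antidiagonal n) =>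
      (hmom ij.1 ij.2 (by rw [HasAntidiagonal.mem_antidiagonal.mp hij]; simpa using hn)).mul_left
        ((n.choose ij.1 : ℝ) / n.factorial * pd f ij.1 ij.2 (x, y))
  have hvalue : ∑ n ∈ range r, ∑ ij ∈ antidiagonal n, (n.choose ij.1 : ℝ) / n.factorial *
      pd f ij.1 ij.2 (x, y) * (if ij.1 + ij.2 = 0 then 1 else 0) = f (x, y) := by
    rw [sum_eq_single_of_mem 0 (mem_range.mpr hr) fun n _ hn => sum_eq_zero fun ij hij => by
      simp [HasAntidiagonal.mem_antidiagonal.mp hij, hn]]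
    simp [pd]
  rw [hvalue] at hsum
  refine hsum.congr_fun fun i => ?_
  simp only [bivariateTaylorPoly, mul_sum]
  exact sum_congr rfl fun n _ => sum_congr rfl fun ij _ => by ring

lemma abs_tsum_mul_sub_le {g T B : ι → ℝ} {s : ℝ} (hT : HasSum (fun i => φ i * T i) s)
    (hB : Summable fun i => |φ i| * B i) (hgT : ∀ i, |g i - T i| ≤ B i) :
    Summable (fun i => φ i * g i) ∧ |∑' i, φ i * g i - s| ≤ ∑' i, |φ i| * B i := by
  have hdiff : ∀ i, |φ i * (g i - T i)| ≤ |φ i| * B i := fun i => by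
    rw [abs_mul]; exact mul_le_mul_of_nonneg_left (hgT i) (abs_nonneg _)
  have hR : Summable fun i => φ i * (g i - T i) :=
    Summable.of_norm_bounded hB hdiff
  have hg : Summable fun i => φ i * g i := (hR.add hT.summable).congr fun i => by ring
  refine ⟨hg, ?_⟩
  rw [← hT.tsum_eq, ← hg.tsum_sub hT.summable]
  calc |∑' i, (φ i * g i - φ i * T i)| = |∑' i, φ i * (g i - T i)| := by simp only [mul_sub]
    _ ≤ ∑' i, |φ i * (g i - T i)| := by
        simpa only [Real.norm_eq_abs] using norm_tsum_le_tsum_norm hR.norm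
    _ ≤ ∑' i, |φ i| * B i := hR.abs.tsum_le_tsum hdiff hB

lemma tsum_abs_mul_bivariateTaylorBound_le {m : ℝ}
    (hs : ∀ p q, p + q = r → Summable fun i => |φ i| * |a i| ^ p * |b i| ^ q)
    (hle : ∀ p q, p + q = r → ∑' i, |φ i| * |a i| ^ p * |b i| ^ q ≤ m) :
    Summable (fun i => |φ i| * bivariateTaylorBound f r (a i) (b i)) ∧
      ∑' i, |φ i| * bivariateTaylorBound f r (a i) (b i) ≤
        m * (∑ ij ∈ antidiagonal r, (r.choose ij.1 : ℝ) * supNorm (pd f ij.1 ij.2)) /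
          r.factorial := by
  have hexpand : (fun i => |φ i| * bivariateTaylorBound f r (a i) (b i)) = fun i =>
      ∑ ij ∈ antidiagonal r, (r.choose ij.1 : ℝ) * supNorm (pd f ij.1 ij.2) / r.factorial *
        (|φ i| * |a i| ^ ij.1 * |b i| ^ ij.2) := by
    funext i
    simp only [bivariateTaylorBound, sum_div, mul_sum]
    exact sum_congr rfl fun ij _ => by ring
  have hterm : ∀ ij ∈ antidiagonal r, Summable fun i => (r.choose ij.1 : ℝ) *
      supNorm (pd f ij.1 ij.2) / r.factorial * (|φ i| * |a i| ^ ij.1 * |b i| ^ ij.2) :=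
    fun ij hij => (hs ij.1 ij.2 (HasAntidiagonal.mem_antidiagonal.mp hij)).mul_left _
  rw [hexpand]
  refine ⟨summable_sum hterm, ?_⟩
  rw [Summable.tsum_finsetSum hterm, mul_sum, sum_div]
  refine sum_le_sum fun ij hij => ?_
  rw [tsum_mul_left]
  have hsup : 0 ≤ supNorm (pd f ij.1 ij.2) := Real.iSup_nonneg fun _ => abs_nonneg _
  calc _ ≤ (r.choose ij.1 : ℝ) * supNorm (pd f ij.1 ij.2) / r.factorial * m :=
        mul_le_mul_of_nonneg_left (hle ij.1 ij.2 (HasAntidiagonal.mem_antidiagonal.mp hij))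
          (by positivity)
    _ = _ := by ring

end WeightedSums

section KernelMoments

variable {χ : ℝ × ℝ → ℝ} {r : ℕ}

lemma tsum_ofReal_absMoment_le_Mmoment (u v : ℝ) {p q : ℕ} (hpq : p + q = r) :
    ∑' kj : ℤ × ℤ, ENNReal.ofReal
      (|χ (u - kj.1, v - kj.2)| * |u - kj.1| ^ p * |v - kj.2| ^ q) ≤ Mmoment χ r := by
  rw [ENNReal.tsum_prod']
  calc _ ≤ absMoment χ p q := by unfold absMoment; exact le_iSup₂_of_le u v le_rfl
    _ ≤ Mmoment χ r := le_iSup_of_le (⟨(p, q), hpq⟩ : {p : ℕ × ℕ // p.1 + p.2 = r}) le_rfl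

lemma summable_absMoment_of_eq (hM : Mmoment χ r < ⊤) (u v : ℝ) {p q : ℕ} (hpq : p + q = r) :
    Summable fun kj : ℤ × ℤ => |χ (u - kj.1, v - kj.2)| * |u - kj.1| ^ p * |v - kj.2| ^ q :=
  (ENNReal.summable_toReal ((tsum_ofReal_absMoment_le_Mmoment u v hpq).trans_lt hM).ne).congr
    fun _ => ENNReal.toReal_ofReal (by positivity)

lemma tsum_absMoment_le (hM : Mmoment χ r < ⊤) (u v : ℝ) {p q : ℕ} (hpq : p + q = r) :
    ∑' kj : ℤ × ℤ, |χ (u - kj.1, v - kj.2)| * |u - kj.1| ^ p * |v - kj.2| ^ q ≤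
      (Mmoment χ r).toReal := by
  rw [← ENNReal.ofReal_le_iff_le_toReal hM.ne,
    ENNReal.ofReal_tsum_of_nonneg (fun _ => by positivity) (summable_absMoment_of_eq hM u v hpq)]
  exact tsum_ofReal_absMoment_le_Mmoment u v hpq

lemma eventually_one_le_abs_sub_intCast (u : ℝ) : ∀ᶠ k : ℤ in cofinite, 1 ≤ |u - k| := by
  filter_upwards [Int.tendsto_coe_cofinite.eventually
    (isCompact_closedBall u 1).compl_mem_cocompact] with k hk
  exact (by simpa [Real.dist_eq, abs_sub_comm] using hk : 1 < |u - k|).le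

lemma pow_mul_pow_le_pow_add_pow {t s : ℝ} (ht : 0 ≤ t) (hs : 0 ≤ s) (h1 : 1 ≤ t ∨ 1 ≤ s)
    {p q r : ℕ} (h : p + q ≤ r) : t ^ p * s ^ q ≤ t ^ r + s ^ r := by
  calc t ^ p * s ^ q ≤ max t s ^ p * max t s ^ q := by gcongr <;> simp
    _ = max t s ^ (p + q) := (pow_add _ _ _).symm
    _ ≤ max t s ^ r := pow_le_pow_right₀ (h1.elim le_max_of_le_left le_max_of_le_right) h
    _ ≤ t ^ r + s ^ r := by
      rcases le_total t s with hts | hts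
      · rw [max_eq_right hts]; linarith [pow_nonneg ht r]
      · rw [max_eq_left hts]; linarith [pow_nonneg hs r]

lemma summable_absMoment (hM : Mmoment χ r < ⊤) (u v : ℝ) {p q : ℕ} (hpq : p + q ≤ r) :
    Summable fun kj : ℤ × ℤ => |χ (u - kj.1, v - kj.2)| * |u - kj.1| ^ p * |v - kj.2| ^ q := by
  have hfar : ∀ᶠ kj : ℤ × ℤ in cofinite, 1 ≤ |u - kj.1| ∨ 1 ≤ |v - kj.2| := by
    rw [← Filter.coprod_cofinite, Filter.coprod, Filter.eventually_sup]
    exact ⟨((eventually_one_le_abs_sub_intCast u).comap Prod.fst).mono fun _ h => Or.inl h,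
      ((eventually_one_le_abs_sub_intCast v).comap Prod.snd).mono fun _ h => Or.inr h⟩
  refine ((summable_absMoment_of_eq hM u v (add_zero r)).add
    (summable_absMoment_of_eq hM u v (zero_add r))).of_norm_bounded_eventually ?_
  filter_upwards [hfar] with kj hkj
  rw [Real.norm_eq_abs, abs_of_nonneg (by positivity)]
  have := pow_mul_pow_le_pow_add_pow (abs_nonneg _) (abs_nonneg _) hkj hpq
  simp only [pow_zero, mul_one]
  rw [mul_assoc, ← mul_add]
  exact mul_le_mul_of_nonneg_left this (abs_nonneg _)

lemma hasSum_moment {c : ℝ} (hM : Mmoment χ r < ⊤) (hpart : PartitionOfUnity2 χ)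
    (hmom : MomentCondition χ r c) (u v : ℝ) {p q : ℕ} (hpq : p + q < r) :
    HasSum (fun kj : ℤ × ℤ => χ (u - kj.1, v - kj.2) * (u - kj.1) ^ p * (v - kj.2) ^ q)
      (if p + q = 0 then 1 else 0) := by
  have hs : Summable fun kj : ℤ × ℤ => χ (u - kj.1, v - kj.2) * (u - kj.1) ^ p * (v - kj.2) ^ q :=
    (summable_absMoment hM u v hpq.le).of_norm_bounded fun _ => by
      simp only [Real.norm_eq_abs, abs_mul, abs_pow, le_refl]
  refine (hs.hasSum_iff.mpr ?_)
  rw [hs.tsum_prod]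
  split_ifs with h0
  · obtain ⟨rfl, rfl⟩ : p = 0 ∧ q = 0 := by omega
    simpa using hpart u v
  · exact hmom.1 u v p q (by omega) (by omega)

end KernelMoments

section Sampling

variable {χ : ℝ × ℝ → ℝ} {r : ℕ} {w : ℝ}

lemma intCast_div_sub_eq (hw : w ≠ 0) (k : ℤ) (x : ℝ) :
    (k : ℝ) / w - x = -w⁻¹ * (w * x - k) := by
  field_simp
  ring

lemma hasSum_sampling_moment {c : ℝ} (hM : Mmoment χ r < ⊤) (hpart : PartitionOfUnity2 χ)
    (hmom : MomentCondition χ r c) (hw : w ≠ 0) (x y : ℝ) {p q : ℕ} (hpq : p + q < r) :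
    HasSum (fun kj : ℤ × ℤ =>
        χ (w * x - kj.1, w * y - kj.2) * (kj.1 / w - x) ^ p * (kj.2 / w - y) ^ q)
      (if p + q = 0 then 1 else 0) := by
  have h := (hasSum_moment hM hpart hmom (w * x) (w * y) hpq).mul_left ((-w⁻¹) ^ (p + q))
  rw [show (-w⁻¹) ^ (p + q) * (if p + q = 0 then (1 : ℝ) else 0) = if p + q = 0 then 1 else 0 by
    split_ifs with h0 <;> simp [h0]] at h
  refine h.congr_fun fun kj => ?_
  rw [intCast_div_sub_eq hw, intCast_div_sub_eq hw, mul_pow, mul_pow, pow_add]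
  ring

lemma sampling_absMoment_eq (hw : 0 < w) (x y : ℝ) (p q : ℕ) (kj : ℤ × ℤ) :
    |χ (w * x - kj.1, w * y - kj.2)| * |kj.1 / w - x| ^ p * |kj.2 / w - y| ^ q =
      w⁻¹ ^ (p + q) *
        (|χ (w * x - kj.1, w * y - kj.2)| * |w * x - kj.1| ^ p * |w * y - kj.2| ^ q) := by
  simp only [intCast_div_sub_eq hw.ne', abs_mul, abs_neg, abs_inv, abs_of_pos hw]
  ring

lemma summable_sampling_absMoment (hM : Mmoment χ r < ⊤) (hw : 0 < w) (x y : ℝ) {p q : ℕ}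
    (hpq : p + q ≤ r) :
    Summable fun kj : ℤ × ℤ =>
      |χ (w * x - kj.1, w * y - kj.2)| * |kj.1 / w - x| ^ p * |kj.2 / w - y| ^ q := by
  simp only [sampling_absMoment_eq hw]
  exact (summable_absMoment hM (w * x) (w * y) hpq).mul_left _

lemma tsum_sampling_absMoment_le (hM : Mmoment χ r < ⊤) (hw : 0 < w) (x y : ℝ) {p q : ℕ}
    (hpq : p + q = r) :
    ∑' kj : ℤ × ℤ, |χ (w * x - kj.1, w * y - kj.2)| * |kj.1 / w - x| ^ p * |kj.2 / w - y| ^ q ≤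
      (Mmoment χ r).toReal / w ^ r := by
  simp only [sampling_absMoment_eq hw, tsum_mul_left, hpq, inv_pow]
  rw [inv_mul_eq_div]
  gcongr
  exact tsum_absMoment_le hM (w * x) (w * y) hpq

end Sampling

open Finset in
lemma sum_antidiagonal_choose_mul_eq_sum_range {R : Type*} [Semiring R] (S : ℕ → ℕ → R)
    (r : ℕ) :
    ∑ ij ∈ antidiagonal r, (r.choose ij.1 : R) * S ij.1 ij.2 =
      ∑ j ∈ range (r + 1), (r.choose j : R) * S (r - j) j := by
  rw [← Nat.sum_antidiagonal_swap]
  simp only [Prod.fst_swap, Prod.snd_swap]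
  rw [Nat.sum_antidiagonal_eq_sum_range_succ (fun i j => (r.choose j : R) * S j i)]
  refine sum_congr rfl fun j hj => ?_
  rw [Nat.choose_symm (by simp at hj; omega)]

theorem statement0_general (χ : ℝ × ℝ → ℝ)
    (hpart : PartitionOfUnity2 χ)
    (r : ℕ) (hr : 1 ≤ r) (c : ℝ)
    (hMr : Mmoment χ r < ⊤)
    (hmom : MomentCondition χ r c)
    (f : ℝ × ℝ → ℝ) (hf : ContDiff ℝ r f)
    (hbd : ∀ i j : ℕ, i + j ≤ r → ∃ C : ℝ, ∀ z, |pd f i j z| ≤ C)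
    (w : ℝ) (hw : 0 < w) (x y : ℝ) :
    |Gop χ w f x y - f (x, y)| ≤
      ((Mmoment χ r).toReal / ((r.factorial : ℝ) * w ^ r)) *
        (∑ j ∈ Finset.range (r + 1), (r.choose j : ℝ) * supNorm (pd f (r - j) j)) := by
  set φ : ℤ × ℤ → ℝ := fun kj => χ (w * x - kj.1, w * y - kj.2)
  set a : ℤ × ℤ → ℝ := fun kj => kj.1 / w - x
  set b : ℤ × ℤ → ℝ := fun kj => kj.2 / w - y
  have hT : HasSum (fun kj => φ kj * bivariateTaylorPoly f r x y (a kj) (b kj)) (f (x, y)) :=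
    hasSum_mul_bivariateTaylorPoly hr
      (fun p q hpq => hasSum_sampling_moment hMr hpart hmom hw.ne' x y hpq) x y
  have hrem (kj : ℤ × ℤ) : |f (kj.1 / w, kj.2 / w) - bivariateTaylorPoly f r x y (a kj) (b kj)| ≤
      bivariateTaylorBound f r (a kj) (b kj) := by
    simpa [a, b] using
      abs_sub_bivariateTaylorPoly_le hr hf (fun i j h => hbd i j h.le) x y (a kj) (b kj)
  obtain ⟨hB, hBle⟩ := tsum_abs_mul_bivariateTaylorBound_le (f := f)
    (fun p q hpq => summable_sampling_absMoment hMr hw x y hpq.le)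
    (fun p q hpq => tsum_sampling_absMoment_le hMr hw x y hpq)
  obtain ⟨hsum, hle⟩ := abs_tsum_mul_sub_le hT hB hrem
  rw [Gop, ← hsum.tsum_prod]
  refine hle.trans (hBle.trans_eq ?_)
  rw [sum_antidiagonal_choose_mul_eq_sum_range (fun i j => supNorm (pd f i j))]
  field_simp

/-- quantitative approximation by the bivariate generalized sampling series
for f ∈ C^r(ℝ²). -/
theorem statement0 (χ : ℝ × ℝ → ℝ) (hχc : Continuous χ) (hχb : ∃ C : ℝ, ∀ p, |χ p| ≤ C)
    (hpart : PartitionOfUnity2 χ)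
    (r : ℕ) (hr : 1 ≤ r) (c : ℝ)
    (hMr : Mmoment χ r < ⊤)
    (hmom : MomentCondition χ r c)
    (f : ℝ × ℝ → ℝ) (hf : ContDiff ℝ r f)
    (hbd : ∀ i j : ℕ, i + j ≤ r → ∃ C : ℝ, ∀ z, |pd f i j z| ≤ C)
    (w : ℝ) (hw : 0 < w) (x y : ℝ) :
    |Gop χ w f x y - f (x, y)| ≤
      ((Mmoment χ r).toReal / ((r.factorial : ℝ) * w ^ r)) *
        (∑ j ∈ Finset.range (r + 1), (r.choose j : ℝ) * supNorm (pd f (r - j) j)) :=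
  statement0_general χ hpart r hr c hMr hmom f hf hbd w hw x y
end

section
/- Let r ∈ ℕ, r ≥ 1, and let χ satisfy M_{r−1}(χ) < ∞ and the moment condition of order r with constant c. Then for every homogeneous polynomial P of degree r−1 in two real variables and every w > 0, (G_w P)(x,y) = P(x,y) for all (x,y) ∈ ℝ²; in particular G_w maps homogeneous polynomials of degree r−1 to homogeneous polynomials of the same degree. -/
open MeasureTheory Filter
open scoped ENNReal BigOperators Topology

/-!
Writing `k / w = x - (w x - k) / w`, the sample `P (k / w, j / w)` is the value at
`(w x - k, w y - j)` of `Q (s, t) = P (x - s / w, y - t / w)`, a polynomial of total degree at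
most `r - 1`. Expanding `Q` in monomials, the partition of unity and the vanishing moments of
orders `1, …, r - 1` annihilate every monomial except the constant one, so
`G_w P (x, y) = Q (0, 0) = P (x, y)`. All the moment series involved converge absolutely by
`M_{r-1}(χ) < ∞` alone: off the finitely many nodes with `|u - k| < 1` and `|v - j| < 1`, a
weight `|u - k| ^ a * |v - j| ^ b` with `a + b ≤ r - 1` is dominated by weights of order exactly
`r - 1`.
-/

namespace MvPolynomial
variable {ι σ τ R : Type*}

theorem totalDegree_bind₁_le [CommSemiring R] (f : σ → MvPolynomial τ R) {k : ℕ}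
    (hf : ∀ i, (f i).totalDegree ≤ k) (P : MvPolynomial σ R) :
    (bind₁ f P).totalDegree ≤ k * P.totalDegree := by
  conv_lhs => rw [P.as_sum, map_sum]
  refine totalDegree_finsetSum_le fun d hd => ?_
  rw [bind₁_monomial]
  refine (totalDegree_mul _ _).trans ?_
  rw [totalDegree_C, zero_add]
  refine (totalDegree_finsetProd _ _).trans ?_
  calc ∑ i ∈ d.support, (f i ^ d i).totalDegree
      ≤ ∑ i ∈ d.support, k * d i :=
        Finset.sum_le_sum fun i _ =>
          (totalDegree_pow _ _).trans (by rw [mul_comm]; gcongr; exact hf i)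
    _ = k * d.degree := by rw [← Finset.mul_sum]; rfl
    _ ≤ k * P.totalDegree := by gcongr; exact le_totalDegree hd

variable [Fintype σ]

theorem hasSum_mul_eval_coeff_zero_of_moments [CommSemiring R] [TopologicalSpace R]
    [IsTopologicalSemiring R] (φ : ι → R) (s : ι → σ → R) (n : ℕ)
    (hmom : ∀ m : σ →₀ ℕ, m.degree ≤ n →
      HasSum (fun i => φ i * ∏ j, s i j ^ m j) (if m = 0 then 1 else 0))
    (Q : MvPolynomial σ R) (hQ : Q.totalDegree ≤ n) :
    HasSum (fun i => φ i * eval (s i) Q) (coeff 0 Q) := by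
  have hsum : HasSum (fun i => φ i * eval (s i) Q)
      (∑ m ∈ Q.support, coeff m Q * if m = 0 then 1 else 0) := by
    simp_rw [eval_eq', Finset.mul_sum]
    exact hasSum_sum fun m hm => ((hmom m ((le_totalDegree hm).trans hQ)).mul_left
      (coeff m Q)).congr_fun fun i => by ring
  rwa [Finset.sum_eq_single 0 (fun m _ hm => by simp [hm])
    (fun h => by simp [notMem_support_iff.mp h]), if_pos rfl, mul_one] at hsum

theorem hasSum_mul_eval_of_moments [CommRing R] [TopologicalSpace R]
    [IsTopologicalRing R] (φ : ι → R) (y : ι → σ → R) (p : σ → R) (n : ℕ)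
    (hmom : ∀ m : σ →₀ ℕ, m.degree ≤ n →
      HasSum (fun i => φ i * ∏ j, (p j - y i j) ^ m j) (if m = 0 then 1 else 0))
    (P : MvPolynomial σ R) (hP : P.totalDegree ≤ n) :
    HasSum (fun i => φ i * eval (y i) P) (eval p P) := by
  have heval (z : σ → R) :
      eval z (bind₁ (fun j => C (p j) - X j) P) = eval (fun j => p j - z j) P := by
    change eval₂Hom _ z _ = _
    rw [eval₂Hom_bind₁]
    simp
  have hdeg : (bind₁ (fun j => C (p j) - X j) P).totalDegree ≤ n := by
    refine (totalDegree_bind₁_le _ (fun j => ?_) P).trans (by rwa [one_mul])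
    refine (totalDegree_sub _ _).trans (max_le (by rw [totalDegree_C]; exact zero_le_one) ?_)
    exact (totalDegree_monomial_le (Finsupp.single j 1) (1 : R)).trans (by simp)
  have := hasSum_mul_eval_coeff_zero_of_moments φ (fun i j => p j - y i j) n hmom _ hdeg
  simpa [heval, ← constantCoeff_eq, ← eval_zero] using this

end MvPolynomial

open MvPolynomial

lemma pow_mul_pow_le_sum_pow_mul_pow {s t : ℝ} (hs : 0 ≤ s) (ht : 0 ≤ t) (h1 : 1 ≤ s ∨ 1 ≤ t)
    {a b n : ℕ} (hab : a + b ≤ n) :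
    s ^ a * t ^ b ≤ ∑ q ∈ Finset.range (n + 1), s ^ q * t ^ (n - q) := by
  obtain ⟨q, hq, hle⟩ : ∃ q ∈ Finset.range (n + 1), s ^ a * t ^ b ≤ s ^ q * t ^ (n - q) := by
    rcases h1 with hs1 | ht1
    · refine ⟨n - b, Finset.mem_range.mpr (by omega), ?_⟩
      rw [Nat.sub_sub_self (by omega)]
      exact mul_le_mul_of_nonneg_right (pow_le_pow_right₀ hs1 (by omega)) (by positivity)
    · refine ⟨a, Finset.mem_range.mpr (by omega), ?_⟩
      exact mul_le_mul_of_nonneg_left (pow_le_pow_right₀ ht1 (by omega)) (by positivity)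
  exact hle.trans (Finset.single_le_sum (f := fun q => s ^ q * t ^ (n - q))
    (fun q _ => by positivity) hq)

lemma Int.finite_setOf_abs_sub_lt (u r : ℝ) : {k : ℤ | |u - k| < r}.Finite :=
  (Set.finite_Icc ⌈u - r⌉ ⌊u + r⌋).subset fun k hk => by
    rw [Set.mem_ofPred_eq, abs_lt] at hk
    exact ⟨Int.ceil_le.mpr (by linarith), Int.le_floor.mpr (by linarith)⟩

section Kernel

variable {χ : ℝ × ℝ → ℝ}

lemma summable_abs_mul_pow_of_Mmoment_lt_top {n : ℕ} (hM : Mmoment χ n < ⊤) (u v : ℝ)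
    {q₁ q₂ : ℕ} (hq : q₁ + q₂ = n) :
    Summable fun kj : ℤ × ℤ =>
      |χ (u - kj.1, v - kj.2)| * |u - kj.1| ^ q₁ * |v - kj.2| ^ q₂ := by
  have hfin : ∑' kj : ℤ × ℤ, ENNReal.ofReal
      (|χ (u - kj.1, v - kj.2)| * |u - kj.1| ^ q₁ * |v - kj.2| ^ q₂) ≠ ⊤ := by
    rw [ENNReal.tsum_prod']
    refine ne_top_of_le_ne_top hM.ne ((le_iSup₂ (f := fun u v : ℝ => ∑' k : ℤ, ∑' j : ℤ,
      ENNReal.ofReal (|χ (u - k, v - j)| * |u - k| ^ q₁ * |v - j| ^ q₂)) u v).trans ?_)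
    exact le_iSup (fun p : {p : ℕ × ℕ // p.1 + p.2 = n} => absMoment χ p.1.1 p.1.2) ⟨(q₁, q₂), hq⟩
  exact (ENNReal.summable_toReal hfin).congr fun _ => ENNReal.toReal_ofReal (by positivity)

lemma summable_mul_pow_of_Mmoment_lt_top {n : ℕ} (hM : Mmoment χ n < ⊤) (u v : ℝ)
    {a b : ℕ} (hab : a + b ≤ n) :
    Summable fun kj : ℤ × ℤ => χ (u - kj.1, v - kj.2) * (u - kj.1) ^ a * (v - kj.2) ^ b := by
  have hg : Summable fun kj : ℤ × ℤ => ∑ q ∈ Finset.range (n + 1),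
      |χ (u - kj.1, v - kj.2)| * |u - kj.1| ^ q * |v - kj.2| ^ (n - q) :=
    summable_sum fun q hq =>
      summable_abs_mul_pow_of_Mmoment_lt_top hM u v (by rw [Finset.mem_range] at hq; omega)
  refine hg.of_norm_bounded_eventually ?_
  have hbox := (Int.finite_setOf_abs_sub_lt u 1).prod (Int.finite_setOf_abs_sub_lt v 1)
  filter_upwards [hbox.compl_mem_cofinite] with kj hkj
  have hfar : 1 ≤ |u - kj.1| ∨ 1 ≤ |v - kj.2| := by
    by_contra! hnear
    exact hkj ⟨hnear.1, hnear.2⟩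
  simp only [norm_mul, norm_pow, Real.norm_eq_abs, mul_assoc, ← Finset.mul_sum]
  gcongr
  exact pow_mul_pow_le_sum_pow_mul_pow (abs_nonneg _) (abs_nonneg _) hfar hab

variable {r : ℕ} {c : ℝ}

lemma hasSum_mul_pow_of_momentCondition (hpart : PartitionOfUnity2 χ)
    (hmom : MomentCondition χ r c) (hM : Mmoment χ (r - 1) < ⊤) (u v : ℝ)
    {a b : ℕ} (hab : a + b ≤ r - 1) :
    HasSum (fun kj : ℤ × ℤ => χ (u - kj.1, v - kj.2) * (u - kj.1) ^ a * (v - kj.2) ^ b)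
      (if a = 0 ∧ b = 0 then 1 else 0) := by
  have hS := summable_mul_pow_of_Mmoment_lt_top hM u v hab
  convert hS.hasSum using 1
  rw [hS.tsum_prod' hS.prod_factor]
  split_ifs with h
  · obtain ⟨rfl, rfl⟩ := h
    simpa using (hpart u v).symm
  · exact (hmom.1 u v a b (by omega) hab).symm

lemma hasSum_mul_sub_div_pow_of_momentCondition (hpart : PartitionOfUnity2 χ)
    (hmom : MomentCondition χ r c) (hM : Mmoment χ (r - 1) < ⊤) {w : ℝ} (hw : w ≠ 0)
    (x y : ℝ) {a b : ℕ} (hab : a + b ≤ r - 1) :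
    HasSum (fun kj : ℤ × ℤ =>
        χ (w * x - kj.1, w * y - kj.2) * (x - kj.1 / w) ^ a * (y - kj.2 / w) ^ b)
      (if a = 0 ∧ b = 0 then 1 else 0) := by
  have h := (hasSum_mul_pow_of_momentCondition hpart hmom hM (w * x) (w * y) hab).mul_left
    (w⁻¹ ^ (a + b))
  have hval : (if a = 0 ∧ b = 0 then 1 else 0 : ℝ) =
      w⁻¹ ^ (a + b) * if a = 0 ∧ b = 0 then 1 else 0 := by
    split_ifs with h0
    · simp [h0.1, h0.2]
    · rw [mul_zero]
  rw [hval]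
  refine h.congr_fun fun kj => ?_
  have hx : x - kj.1 / w = w⁻¹ * (w * x - kj.1) := by field_simp
  have hy : y - kj.2 / w = w⁻¹ * (w * y - kj.2) := by field_simp
  rw [hx, hy, mul_pow, mul_pow, pow_add]
  ring

end Kernel

theorem statement1_general (χ : ℝ × ℝ → ℝ)
    (hpart : PartitionOfUnity2 χ)
    (r : ℕ) (c : ℝ)
    (hMr1 : Mmoment χ (r - 1) < ⊤)
    (hmom : MomentCondition χ r c)
    (P : MvPolynomial (Fin 2) ℝ) (hP : P.IsHomogeneous (r - 1))
    (w : ℝ) (hw : 0 < w) (x y : ℝ) :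
    Gop χ w (fun p => MvPolynomial.eval ![p.1, p.2] P) x y =
      MvPolynomial.eval ![x, y] P := by
  have hF : HasSum (fun kj : ℤ × ℤ =>
      χ (w * x - kj.1, w * y - kj.2) * eval ![(kj.1 : ℝ) / w, kj.2 / w] P) (eval ![x, y] P) := by
    refine hasSum_mul_eval_of_moments (fun kj : ℤ × ℤ => χ (w * x - kj.1, w * y - kj.2))
      (fun kj => ![(kj.1 : ℝ) / w, kj.2 / w]) ![x, y] (r - 1) (fun m hm => ?_) P hP.totalDegree_le
    rw [Finsupp.degree_eq_sum, Fin.sum_univ_two] at hm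
    have hm0 : m = 0 ↔ m 0 = 0 ∧ m 1 = 0 := by simp [Finsupp.ext_iff, Fin.forall_fin_two]
    simpa [Fin.prod_univ_two, hm0, mul_assoc] using
      hasSum_mul_sub_div_pow_of_momentCondition hpart hmom hMr1 hw.ne' x y hm
  rw [Gop, ← hF.tsum_eq, hF.summable.tsum_prod' hF.summable.prod_factor]

/-- G_w reproduces homogeneous polynomials of degree r − 1. -/
theorem statement1 (χ : ℝ × ℝ → ℝ) (hχc : Continuous χ) (hχb : ∃ C : ℝ, ∀ p, |χ p| ≤ C)
    (hpart : PartitionOfUnity2 χ)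
    (r : ℕ) (hr : 1 ≤ r) (c : ℝ)
    (hMr1 : Mmoment χ (r - 1) < ⊤)
    (hmom : MomentCondition χ r c)
    (P : MvPolynomial (Fin 2) ℝ) (hP : P.IsHomogeneous (r - 1))
    (w : ℝ) (hw : 0 < w) (x y : ℝ) :
    Gop χ w (fun p => MvPolynomial.eval ![p.1, p.2] P) x y =
      MvPolynomial.eval ![x, y] P :=
  statement1_general χ hpart r c hMr1 hmom P hP w hw x y
end

section
/- Let χ satisfy M₂(χ) < ∞ and let f ∈ C²(ℝ²) with ‖∂²f/∂x²‖_∞ ≤ M₁, ‖∂²f/∂x∂y‖_∞ ≤ M₂, ‖∂²f/∂y²‖_∞ ≤ M₃, and set M := max{M₁, M₂, M₃}. Define the remainder R₂^w(x,y) := (S_w f)(x,y) − (G_w f)(x,y) − (1/(2w)) (G_w (∂f/∂x))(x,y) − (1/(2w)) (G_w (∂f/∂y))(x,y). Then for every w > 0 and every (x,y) ∈ ℝ², all the series involved converge absolutely and |R₂^w(x,y)| ≤ (7M / (12 w²)) · M_{(0,0)}(χ); in particular S_w f = G_w f + (1/(2w)) G_w(∂f/∂x) + (1/(2w)) G_w(∂f/∂y)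 + R₂^w with w·R₂^w(x,y) → 0 uniformly as w → ∞. -/
open MeasureTheory Filter
open scoped ENNReal BigOperators Topology

/-!
On the cell `[k/w, (k+1)/w] × [j/w, (j+1)/w]` the second-order Taylor bound
`|f (u, v) - T (u, v)| ≤ M₁/2 s² + M₂ s t + M₃/2 t²`, with `T` the first-order Taylor polynomial at
the corner and `s, t` the offsets from it, integrates to
`|w² ∬ f - f - (∂ₓf + ∂ᵧf)/(2w)| ≤ (M₁/6 + M₂/4 + M₃/6)/w² ≤ 7M/(12w²)`.
The remainder is the `χ (w x - k, w y - j)`-weighted sum of these cell errors, hence at most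
`7M/(12w²) · M₀(χ)`. Bounded second derivatives make `f`, `∂ₓf` and `∂ᵧf` grow at most
quadratically, which the moments `M₀(χ)` and `M₂(χ)` absorb: this gives absolute convergence.
-/

section OneVariable

variable {φ : ℝ → ℝ} {K : ℝ}

theorem abs_sub_le_of_abs_deriv_le (hφ : Differentiable ℝ φ) (hK : ∀ t, |deriv φ t| ≤ K)
    (s t : ℝ) : |φ s - φ t| ≤ K * |s - t| :=
  Convex.norm_image_sub_le_of_norm_deriv_le (fun x _ => hφ x) (fun x _ => hK x) convex_univ
    trivial trivial

theorem abs_sub_sub_deriv_mul_le_of_le (hφ : Differentiable ℝ φ) (hφ' : Differentiable ℝ (deriv φ))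
    (hK : ∀ t, |deriv (deriv φ) t| ≤ K) {t₀ s : ℝ} (h : t₀ ≤ s) :
    |φ s - φ t₀ - deriv φ t₀ * (s - t₀)| ≤ K / 2 * (s - t₀) ^ 2 := by
  have := hφ.continuous
  refine image_norm_le_of_norm_deriv_right_le_deriv_boundary
    (f := fun t => φ t - φ t₀ - deriv φ t₀ * (t - t₀)) (f' := fun t => deriv φ t - deriv φ t₀)
    (B := fun t => K / 2 * (t - t₀) ^ 2) (B' := fun t => K * (t - t₀))
    (by fun_prop) (fun t _ => ?_) (by simp) (fun t => ?_) (fun t ht => ?_) ⟨h, le_rfl⟩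
  · exact ((((hφ t).hasDerivAt.sub_const _).sub
      (((hasDerivAt_id t).sub_const t₀).const_mul _)).congr_deriv (by simp)).hasDerivWithinAt
  · exact (((hasDerivAt_id t).sub_const t₀).pow 2 |>.const_mul _).congr_deriv (by simp; ring)
  · simpa [abs_of_nonneg (sub_nonneg.2 ht.1)] using abs_sub_le_of_abs_deriv_le hφ' hK t t₀

theorem abs_sub_sub_deriv_mul_le (hφ : Differentiable ℝ φ) (hφ' : Differentiable ℝ (deriv φ))
    (hK : ∀ t, |deriv (deriv φ) t| ≤ K) (t₀ s : ℝ) :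
    |φ s - φ t₀ - deriv φ t₀ * (s - t₀)| ≤ K / 2 * (s - t₀) ^ 2 := by
  rcases le_total t₀ s with h | h
  · exact abs_sub_sub_deriv_mul_le_of_le hφ hφ' hK h
  -- For `s < t₀`, apply the first case to `t ↦ φ (-t)` at `-t₀ ≤ -s`.
  have hψ : deriv (fun t => φ (-t)) = fun t => -deriv φ (-t) := funext fun t => deriv_comp_neg ..
  have hψ' : deriv (deriv fun t => φ (-t)) = fun t => deriv (deriv φ) (-t) := by
    funext t
    rw [hψ, deriv.fun_neg, deriv_comp_neg, neg_neg]
  have := abs_sub_sub_deriv_mul_le_of_le (φ := fun t => φ (-t)) (K := K) (by fun_prop)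
    (by rw [hψ]; fun_prop) (fun t => by rw [hψ']; exact hK _) (neg_le_neg h)
  simp only [hψ, neg_neg] at this
  convert this using 2 <;> ring

end OneVariable

def HasQuadraticGrowth (g : ℝ × ℝ → ℝ) : Prop :=
  ∃ C, ∀ p : ℝ × ℝ, |g p| ≤ C * (1 + p.1 ^ 2 + p.2 ^ 2)

namespace HasQuadraticGrowth

variable {f g : ℝ × ℝ → ℝ}

theorem of_abs_le_shift (hf : HasQuadraticGrowth f) (s t K : ℝ)
    (h : ∀ u v, |g (u, v)| ≤ |f (u + s, v + t)| + |f (u, v)| + K) : HasQuadraticGrowth g := by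
  obtain ⟨C, hC⟩ := hf
  have hC0 : 0 ≤ C := by simpa using (abs_nonneg _).trans (hC 0)
  refine ⟨C * (3 + 2 * s ^ 2 + 2 * t ^ 2) + |K|, fun ⟨u, v⟩ => ?_⟩
  have h₁ := hC (u + s, v + t)
  have h₂ := hC (u, v)
  dsimp only at h₁ h₂ ⊢
  nlinarith [h u v, le_abs_self K, mul_nonneg hC0 (sq_nonneg (u - s)),
    mul_nonneg hC0 (sq_nonneg (v - t)),
    mul_nonneg (abs_nonneg K) (add_nonneg (sq_nonneg u) (sq_nonneg v)),
    mul_nonneg hC0 (mul_nonneg (add_nonneg (sq_nonneg s) (sq_nonneg t))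
      (add_nonneg (sq_nonneg u) (sq_nonneg v)))]

end HasQuadraticGrowth

section TwoVariables

variable {f : ℝ × ℝ → ℝ}

theorem contDiff_pX_s2 {n : WithTop ℕ∞} (hf : ContDiff ℝ (n + 1) f) : ContDiff ℝ n (pX f) := by
  have hd : Differentiable ℝ f := hf.differentiable (by simp)
  have : pX f = fun p => fderiv ℝ f p (1, 0) := by
    funext p
    exact ((hd _).hasFDerivAt.comp_hasDerivAt p.1
      ((hasDerivAt_id p.1).prodMk (hasDerivAt_const p.1 p.2))).deriv
  rw [this]
  exact (hf.fderiv_right le_rfl).clm_apply contDiff_const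

theorem contDiff_pY_s2 {n : WithTop ℕ∞} (hf : ContDiff ℝ (n + 1) f) : ContDiff ℝ n (pY f) := by
  have hd : Differentiable ℝ f := hf.differentiable (by simp)
  have : pY f = fun p => fderiv ℝ f p (0, 1) := by
    funext p
    exact ((hd _).hasFDerivAt.comp_hasDerivAt p.2
      ((hasDerivAt_const p.2 p.1).prodMk (hasDerivAt_id p.2))).deriv
  rw [this]
  exact (hf.fderiv_right le_rfl).clm_apply contDiff_const

variable {M₁ M₂ M₃ : ℝ}

theorem abs_sub_sub_pd_mul_sub_pd_mul_le (hf : ContDiff ℝ 2 f) (hb1 : ∀ z, |pd f 2 0 z| ≤ M₁)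
    (hb2 : ∀ z, |pd f 1 1 z| ≤ M₂) (hb3 : ∀ z, |pd f 0 2 z| ≤ M₃) (a b u v : ℝ) :
    |f (u, v) - f (a, b) - pd f 1 0 (a, b) * (u - a) - pd f 0 1 (a, b) * (v - b)| ≤
      M₁ / 2 * (u - a) ^ 2 + M₂ * |u - a| * |v - b| + M₃ / 2 * (v - b) ^ 2 := by
  have hd : Differentiable ℝ f := hf.differentiable (by simp)
  have hdX : Differentiable ℝ (pX f) := (contDiff_pX_s2 (n := 1) hf).differentiable (by simp)
  have hdY : Differentiable ℝ (pY f) := (contDiff_pY_s2 (n := 1) hf).differentiable (by simp)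
  have hx : |f (u, b) - f (a, b) - pd f 1 0 (a, b) * (u - a)| ≤ M₁ / 2 * (u - a) ^ 2 :=
    abs_sub_sub_deriv_mul_le (φ := fun t => f (t, b)) (by fun_prop)
      (show Differentiable ℝ fun t => pX f (t, b) by fun_prop) (fun t => hb1 (t, b)) a u
  have hy : |f (u, v) - f (u, b) - pd f 0 1 (u, b) * (v - b)| ≤ M₃ / 2 * (v - b) ^ 2 :=
    abs_sub_sub_deriv_mul_le (φ := fun t => f (u, t)) (by fun_prop)
      (show Differentiable ℝ fun t => pY f (u, t) by fun_prop) (fun t => hb3 (u, t)) b v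
  have hxy : |pd f 0 1 (u, b) - pd f 0 1 (a, b)| ≤ M₂ * |u - a| :=
    abs_sub_le_of_abs_deriv_le (φ := fun t => pY f (t, b)) (by fun_prop) (fun t => hb2 (t, b)) u a
  calc _ = |(f (u, v) - f (u, b) - pd f 0 1 (u, b) * (v - b)) +
          (f (u, b) - f (a, b) - pd f 1 0 (a, b) * (u - a)) +
          (pd f 0 1 (u, b) - pd f 0 1 (a, b)) * (v - b)| := by ring_nf
    _ ≤ _ := abs_add_three _ _ _
    _ ≤ _ := by
      rw [abs_mul]
      have := mul_le_mul_of_nonneg_right hxy (abs_nonneg (v - b))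
      linarith

theorem hasQuadraticGrowth_of_bounded_second_partials (hf : ContDiff ℝ 2 f)
    (hb1 : ∀ z, |pd f 2 0 z| ≤ M₁) (hb2 : ∀ z, |pd f 1 1 z| ≤ M₂)
    (hb3 : ∀ z, |pd f 0 2 z| ≤ M₃) : HasQuadraticGrowth f := by
  set c₁ := pd f 1 0 (0, 0)
  set c₂ := pd f 0 1 (0, 0)
  have hM₁ : 0 ≤ M₁ := (abs_nonneg _).trans (hb1 0)
  have hM₂ : 0 ≤ M₂ := (abs_nonneg _).trans (hb2 0)
  have hM₃ : 0 ≤ M₃ := (abs_nonneg _).trans (hb3 0)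
  refine ⟨|f (0, 0)| + |c₁| + |c₂| + M₁ + M₂ + M₃, fun ⟨u, v⟩ => ?_⟩
  have hT : |f (u, v) - f (0, 0) - c₁ * u - c₂ * v| ≤
      M₁ / 2 * u ^ 2 + M₂ * |u| * |v| + M₃ / 2 * v ^ 2 := by
    simpa using abs_sub_sub_pd_mul_sub_pd_mul_le hf hb1 hb2 hb3 0 0 u v
  have hlin := abs_add_three (f (0, 0)) (c₁ * u) (c₂ * v)
  have hsplit := abs_add_le (f (0, 0) + c₁ * u + c₂ * v) (f (u, v) - f (0, 0) - c₁ * u - c₂ * v)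
  rw [abs_mul, abs_mul] at hlin
  rw [show f (0, 0) + c₁ * u + c₂ * v + (f (u, v) - f (0, 0) - c₁ * u - c₂ * v) = f (u, v) by
    ring] at hsplit
  have hu : |u| ≤ 1 + u ^ 2 + v ^ 2 := by nlinarith [sq_abs u, sq_nonneg (|u| - 1)]
  have hv : |v| ≤ 1 + u ^ 2 + v ^ 2 := by nlinarith [sq_abs v, sq_nonneg (|v| - 1)]
  have huv : |u| * |v| ≤ 1 + u ^ 2 + v ^ 2 := by
    nlinarith [sq_abs u, sq_abs v, sq_nonneg (|u| - |v|)]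
  dsimp only
  nlinarith [mul_le_mul_of_nonneg_left hu (abs_nonneg c₁),
    mul_le_mul_of_nonneg_left hv (abs_nonneg c₂), mul_le_mul_of_nonneg_left huv hM₂,
    mul_nonneg hM₁ (add_nonneg (sq_nonneg u) (sq_nonneg v)),
    mul_nonneg hM₃ (add_nonneg (sq_nonneg u) (sq_nonneg v)),
    mul_nonneg (abs_nonneg (f (0, 0))) (add_nonneg (sq_nonneg u) (sq_nonneg v))]

theorem hasQuadraticGrowth_pd_one_zero (hf : ContDiff ℝ 2 f)
    (hb1 : ∀ z, |pd f 2 0 z| ≤ M₁) (hb2 : ∀ z, |pd f 1 1 z| ≤ M₂)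
    (hb3 : ∀ z, |pd f 0 2 z| ≤ M₃) : HasQuadraticGrowth (pd f 1 0) := by
  refine (hasQuadraticGrowth_of_bounded_second_partials hf hb1 hb2 hb3).of_abs_le_shift 1 0
    (M₁ / 2) fun u v => ?_
  have hT : |f (u + 1, v) - f (u, v) - pd f 1 0 (u, v)| ≤ M₁ / 2 := by
    simpa using abs_sub_sub_pd_mul_sub_pd_mul_le hf hb1 hb2 hb3 u v (u + 1) v
  have := abs_sub (f (u + 1, v) - f (u, v)) (f (u + 1, v) - f (u, v) - pd f 1 0 (u, v))
  rw [sub_sub_cancel] at this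
  rw [add_zero]
  linarith [abs_sub (f (u + 1, v)) (f (u, v))]

theorem hasQuadraticGrowth_pd_zero_one (hf : ContDiff ℝ 2 f)
    (hb1 : ∀ z, |pd f 2 0 z| ≤ M₁) (hb2 : ∀ z, |pd f 1 1 z| ≤ M₂)
    (hb3 : ∀ z, |pd f 0 2 z| ≤ M₃) : HasQuadraticGrowth (pd f 0 1) := by
  refine (hasQuadraticGrowth_of_bounded_second_partials hf hb1 hb2 hb3).of_abs_le_shift 0 1
    (M₃ / 2) fun u v => ?_
  have hT : |f (u, v + 1) - f (u, v) - pd f 0 1 (u, v)| ≤ M₃ / 2 := by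
    simpa using abs_sub_sub_pd_mul_sub_pd_mul_le hf hb1 hb2 hb3 u v u (v + 1)
  have := abs_sub (f (u, v + 1) - f (u, v)) (f (u, v + 1) - f (u, v) - pd f 0 1 (u, v))
  rw [sub_sub_cancel] at this
  rw [add_zero]
  linarith [abs_sub (f (u, v + 1)) (f (u, v))]

end TwoVariables

section Moments

variable {χ : ℝ × ℝ → ℝ} {p₁ p₂ : ℕ}

theorem tsum_ofReal_le_absMoment (u v : ℝ) :
    ∑' kj : ℤ × ℤ, ENNReal.ofReal
      (|χ (u - kj.1, v - kj.2)| * |u - kj.1| ^ p₁ * |v - kj.2| ^ p₂) ≤ absMoment χ p₁ p₂ := by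
  rw [ENNReal.tsum_prod']
  exact le_iSup₂ (f := fun u v => ∑' (k : ℤ) (j : ℤ),
    ENNReal.ofReal (|χ (u - k, v - j)| * |u - k| ^ p₁ * |v - j| ^ p₂)) u v

theorem summable_of_absMoment_lt_top (h : absMoment χ p₁ p₂ < ⊤) (u v : ℝ) :
    Summable fun kj : ℤ × ℤ => |χ (u - kj.1, v - kj.2)| * |u - kj.1| ^ p₁ * |v - kj.2| ^ p₂ :=
  (ENNReal.summable_toReal ((tsum_ofReal_le_absMoment u v).trans_lt h).ne).congr
    fun _ => ENNReal.toReal_ofReal (by positivity)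

theorem tsum_le_absMoment (h : absMoment χ p₁ p₂ < ⊤) (u v : ℝ) :
    ∑' kj : ℤ × ℤ, |χ (u - kj.1, v - kj.2)| * |u - kj.1| ^ p₁ * |v - kj.2| ^ p₂ ≤
      (absMoment χ p₁ p₂).toReal := by
  rw [← ENNReal.ofReal_le_iff_le_toReal h.ne, ENNReal.ofReal_tsum_of_nonneg
    (fun _ => by positivity) (summable_of_absMoment_lt_top h u v)]
  exact tsum_ofReal_le_absMoment u v

theorem absMoment_le_Mmoment {η : ℕ} (h : p₁ + p₂ = η) : absMoment χ p₁ p₂ ≤ Mmoment χ η :=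
  le_iSup (fun p : {p : ℕ × ℕ // p.1 + p.2 = η} => absMoment χ p.1.1 p.1.2) ⟨(p₁, p₂), h⟩

end Moments

theorem HasQuadraticGrowth.summable_abs_mul_sample {χ g : ℝ × ℝ → ℝ} (hg : HasQuadraticGrowth g)
    (h00 : absMoment χ 0 0 < ⊤) (h20 : absMoment χ 2 0 < ⊤) (h02 : absMoment χ 0 2 < ⊤)
    {w : ℝ} (hw : 0 < w) (x y : ℝ) :
    Summable fun kj : ℤ × ℤ => |χ (w * x - kj.1, w * y - kj.2) * g (kj.1 / w, kj.2 / w)| := by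
  obtain ⟨C, hC⟩ := hg
  have hC0 : 0 ≤ C := by simpa using (abs_nonneg _).trans (hC 0)
  have hdom := ((summable_of_absMoment_lt_top h00 (w * x) (w * y)).mul_left
      (C * (1 + 2 * x ^ 2 + 2 * y ^ 2))).add
    (((summable_of_absMoment_lt_top h20 (w * x) (w * y)).add
      (summable_of_absMoment_lt_top h02 (w * x) (w * y))).mul_left (2 * C / w ^ 2))
  refine hdom.of_nonneg_of_le (fun _ => abs_nonneg _) fun ⟨k, j⟩ => ?_
  have hsq : ∀ (z : ℝ) (n : ℤ), (n / w) ^ 2 ≤ 2 * z ^ 2 + 2 * (w * z - n) ^ 2 / w ^ 2 := by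
    intro z n
    have : (n : ℝ) / w = z - (w * z - n) / w := by field_simp; ring
    rw [this, mul_div_assoc, ← div_pow]
    nlinarith [sq_nonneg (z + (w * z - n) / w)]
  have hbound := hC ((k : ℝ) / w, (j : ℝ) / w)
  dsimp only at hbound ⊢
  simp only [pow_zero, mul_one, sq_abs, abs_mul]
  have hχ := abs_nonneg (χ (w * x - k, w * y - j))
  calc |χ (w * x - k, w * y - j)| * |g (k / w, j / w)|
      ≤ |χ (w * x - k, w * y - j)| * (C * (1 + (2 * x ^ 2 + 2 * (w * x - k) ^ 2 / w ^ 2) +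
          (2 * y ^ 2 + 2 * (w * y - j) ^ 2 / w ^ 2))) := by
        gcongr
        exact hbound.trans (by gcongr <;> apply hsq)
    _ = _ := by ring

section Cell

theorem integral_quadratic (b h A B C : ℝ) :
    ∫ v in b..b + h, (A + B * (v - b) + C * (v - b) ^ 2) =
      A * h + B * h ^ 2 / 2 + C * h ^ 3 / 3 := by
  have hi : ∀ g : ℝ → ℝ, Continuous g → IntervalIntegrable g volume 0 h :=
    fun g hg => hg.intervalIntegrable 0 h
  rw [intervalIntegral.integral_comp_sub_right (fun v => A + B * v + C * v ^ 2),
    add_sub_cancel_left, sub_self,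
    intervalIntegral.integral_add (hi _ (by fun_prop)) (hi _ (by fun_prop)),
    intervalIntegral.integral_add (hi _ (by fun_prop)) (hi _ (by fun_prop)),
    intervalIntegral.integral_const_mul B fun x => x, intervalIntegral.integral_const_mul,
    integral_id, integral_pow, intervalIntegral.integral_const, smul_eq_mul]
  ring

theorem integral_integral_quadratic (a b h c₀ c₁ c₂ c₁₁ c₁₂ c₂₂ : ℝ) :
    ∫ u in a..a + h, ∫ v in b..b + h, (c₀ + c₁ * (u - a) + c₂ * (v - b) + c₁₁ * (u - a) ^ 2 +
      c₁₂ * (u - a) * (v - b) + c₂₂ * (v - b) ^ 2) =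
      c₀ * h ^ 2 + (c₁ + c₂) * h ^ 3 / 2 + (c₁₁ + c₂₂) * h ^ 4 / 3 + c₁₂ * h ^ 4 / 4 := by
  have hinner : ∀ u, ∫ v in b..b + h, (c₀ + c₁ * (u - a) + c₂ * (v - b) + c₁₁ * (u - a) ^ 2 +
      c₁₂ * (u - a) * (v - b) + c₂₂ * (v - b) ^ 2) =
      (c₀ * h + c₂ * h ^ 2 / 2 + c₂₂ * h ^ 3 / 3) + (c₁ * h + c₁₂ * h ^ 2 / 2) * (u - a) +
        c₁₁ * h * (u - a) ^ 2 := fun u => by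
    refine (Eq.trans ?_ (integral_quadratic b h (c₀ + c₁ * (u - a) + c₁₁ * (u - a) ^ 2)
      (c₂ + c₁₂ * (u - a)) c₂₂)).trans (by ring)
    congr 1; ext v; ring
  simp_rw [hinner, integral_quadratic]
  ring

variable {F G : ℝ × ℝ → ℝ} {a a' b b' : ℝ}

theorem integral_integral_sub (hF : Continuous F) (hG : Continuous G) :
    ∫ u in a..a', ∫ v in b..b', (F (u, v) - G (u, v)) =
      (∫ u in a..a', ∫ v in b..b', F (u, v)) - ∫ u in a..a', ∫ v in b..b', G (u, v) := by
  rw [← intervalIntegral.integral_sub ((by fun_prop : Continuous _).intervalIntegrable _ _)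
    ((by fun_prop : Continuous _).intervalIntegrable _ _)]
  congr 1; ext u
  exact intervalIntegral.integral_sub ((by fun_prop : Continuous _).intervalIntegrable _ _)
    ((by fun_prop : Continuous _).intervalIntegrable _ _)

theorem abs_integral_integral_le (hF : Continuous F) (hG : Continuous G) (ha : a ≤ a')
    (hb : b ≤ b') (h : ∀ u ∈ Set.Icc a a', ∀ v ∈ Set.Icc b b', |F (u, v)| ≤ G (u, v)) :
    |∫ u in a..a', ∫ v in b..b', F (u, v)| ≤ ∫ u in a..a', ∫ v in b..b', G (u, v) :=
  (intervalIntegral.abs_integral_le_integral_abs ha).trans <|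
    intervalIntegral.integral_mono_on ha ((by fun_prop : Continuous _).intervalIntegrable _ _)
      ((by fun_prop : Continuous _).intervalIntegrable _ _) fun u hu =>
    (intervalIntegral.abs_integral_le_integral_abs hb).trans <|
      intervalIntegral.integral_mono_on hb ((by fun_prop : Continuous _).intervalIntegrable _ _)
        ((by fun_prop : Continuous _).intervalIntegrable _ _) (h u hu)

theorem abs_integral_integral_sub_taylor_le {f : ℝ × ℝ → ℝ} {M₁ M₂ M₃ : ℝ} (hf : ContDiff ℝ 2 f)
    (hb1 : ∀ z, |pd f 2 0 z| ≤ M₁) (hb2 : ∀ z, |pd f 1 1 z| ≤ M₂)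
    (hb3 : ∀ z, |pd f 0 2 z| ≤ M₃) (a b : ℝ) {h : ℝ} (hh : 0 ≤ h) :
    |(∫ u in a..a + h, ∫ v in b..b + h, f (u, v)) - h ^ 2 * f (a, b) -
        h ^ 3 / 2 * pd f 1 0 (a, b) - h ^ 3 / 2 * pd f 0 1 (a, b)| ≤
      (M₁ / 6 + M₂ / 4 + M₃ / 6) * h ^ 4 := by
  set T : ℝ × ℝ → ℝ := fun p => f (a, b) + pd f 1 0 (a, b) * (p.1 - a) +
    pd f 0 1 (a, b) * (p.2 - b) with hT
  set B : ℝ × ℝ → ℝ := fun p => M₁ / 2 * (p.1 - a) ^ 2 + M₂ * (p.1 - a) * (p.2 - b) +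
    M₃ / 2 * (p.2 - b) ^ 2 with hB
  have hTint := integral_integral_quadratic a b h (f (a, b)) (pd f 1 0 (a, b)) (pd f 0 1 (a, b))
    0 0 0
  have hBint := integral_integral_quadratic a b h 0 0 0 (M₁ / 2) M₂ (M₃ / 2)
  simp only [zero_mul, add_zero, zero_add] at hTint hBint
  have hfT : ∀ u ∈ Set.Icc a (a + h), ∀ v ∈ Set.Icc b (b + h),
      |f (u, v) - T (u, v)| ≤ B (u, v) := by
    intro u hu v hv
    have := abs_sub_sub_pd_mul_sub_pd_mul_le hf hb1 hb2 hb3 a b u v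
    rw [abs_of_nonneg (sub_nonneg.2 hu.1), abs_of_nonneg (sub_nonneg.2 hv.1)] at this
    simpa only [hT, hB, sub_add_eq_sub_sub] using this
  have hTc : Continuous T := by fun_prop
  calc _ = |∫ u in a..a + h, ∫ v in b..b + h, (f (u, v) - T (u, v))| := by
        rw [integral_integral_sub hf.continuous hTc, hT, hTint]
        ring_nf
    _ ≤ ∫ u in a..a + h, ∫ v in b..b + h, B (u, v) :=
        abs_integral_integral_le (hf.continuous.sub hTc) (by fun_prop) (by linarith)
          (by linarith) hfT
    _ = _ := by rw [hB, hBint]; ring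

theorem abs_kantorovich_mean_sub_le {f : ℝ × ℝ → ℝ} {M₁ M₂ M₃ M : ℝ} (hf : ContDiff ℝ 2 f)
    (hb1 : ∀ z, |pd f 2 0 z| ≤ M₁) (hb2 : ∀ z, |pd f 1 1 z| ≤ M₂)
    (hb3 : ∀ z, |pd f 0 2 z| ≤ M₃) (h₁ : M₁ ≤ M) (h₂ : M₂ ≤ M) (h₃ : M₃ ≤ M) {w : ℝ}
    (hw : 0 < w) (s t : ℝ) :
    |w ^ 2 * (∫ u in s / w..(s + 1) / w, ∫ v in t / w..(t + 1) / w, f (u, v)) - f (s / w, t / w) -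
        1 / (2 * w) * pd f 1 0 (s / w, t / w) - 1 / (2 * w) * pd f 0 1 (s / w, t / w)| ≤
      7 * M / (12 * w ^ 2) := by
  have hcell := abs_integral_integral_sub_taylor_le hf hb1 hb2 hb3 (s / w) (t / w)
    (h := 1 / w) (by positivity)
  rw [← add_div, ← add_div] at hcell
  set I := ∫ u in s / w..(s + 1) / w, ∫ v in t / w..(t + 1) / w, f (u, v)
  calc _ = |w ^ 2 * (I - (1 / w) ^ 2 * f (s / w, t / w) -
          (1 / w) ^ 3 / 2 * pd f 1 0 (s / w, t / w) -
          (1 / w) ^ 3 / 2 * pd f 0 1 (s / w, t / w))| := by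
        congr 1
        field_simp
    _ = w ^ 2 * |I - (1 / w) ^ 2 * f (s / w, t / w) - (1 / w) ^ 3 / 2 * pd f 1 0 (s / w, t / w) -
          (1 / w) ^ 3 / 2 * pd f 0 1 (s / w, t / w)| := by
        rw [abs_mul, abs_of_pos (by positivity)]
    _ ≤ w ^ 2 * ((M₁ / 6 + M₂ / 4 + M₃ / 6) * (1 / w) ^ 4) := by gcongr
    _ ≤ w ^ 2 * ((M / 6 + M / 4 + M / 6) * (1 / w) ^ 4) := by gcongr
    _ = 7 * M / (12 * w ^ 2) := by field_simp; ring

end Cell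

theorem summable_abs_mul_and_abs_tsum_sub_le {ι : Type*} {c S F P Q : ι → ℝ} {α ε : ℝ}
    (hc : Summable fun i => |c i|) (hF : Summable fun i => |c i * F i|)
    (hP : Summable fun i => |c i * P i|) (hQ : Summable fun i => |c i * Q i|)
    (hE : ∀ i, |S i - F i - α * P i - α * Q i| ≤ ε) :
    (Summable fun i => |c i * S i|) ∧
      |∑' i, c i * S i - ∑' i, c i * F i - α * ∑' i, c i * P i - α * ∑' i, c i * Q i| ≤
        ε * ∑' i, |c i| := by
  set E := fun i => S i - F i - α * P i - α * Q i
  have hcE : ∀ i, |c i * E i| ≤ ε * |c i| := fun i => by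
    rw [abs_mul, mul_comm]; exact mul_le_mul_of_nonneg_right (hE i) (abs_nonneg _)
  have hsE : Summable fun i => |c i * E i| :=
    (hc.mul_left ε).of_nonneg_of_le (fun _ => abs_nonneg _) hcE
  have hsplit : ∀ i, c i * S i = c i * F i + α * (c i * P i) + α * (c i * Q i) + c i * E i :=
    fun i => by simp only [E]; ring
  refine ⟨(((hF.add (hP.mul_left |α|)).add (hQ.mul_left |α|)).add hsE).of_nonneg_of_le
    (fun _ => abs_nonneg _) fun i => ?_, ?_⟩
  · rw [hsplit, ← abs_mul, ← abs_mul]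
    exact (abs_add_le _ _).trans (add_le_add (abs_add_three _ _ _) le_rfl)
  · have hsum : ∑' i, c i * S i - ∑' i, c i * F i - α * ∑' i, c i * P i -
        α * ∑' i, c i * Q i = ∑' i, c i * E i := by
      have sF := hF.of_abs
      have sP := hP.of_abs.mul_left α
      have sQ := hQ.of_abs.mul_left α
      rw [tsum_congr hsplit, ((sF.add sP).add sQ).tsum_add hsE.of_abs, (sF.add sP).tsum_add sQ,
        sF.tsum_add sP, tsum_mul_left, tsum_mul_left]
      ring
    rw [hsum]
    calc |∑' i, c i * E i| ≤ ∑' i, |c i * E i| := by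
          simpa only [Real.norm_eq_abs] using norm_tsum_le_tsum_norm (f := fun i => c i * E i)
            (by simpa only [Real.norm_eq_abs] using hsE)
      _ ≤ ∑' i, ε * |c i| := hsE.tsum_le_tsum hcE (hc.mul_left ε)
      _ = ε * ∑' i, |c i| := tsum_mul_left

theorem tendsto_iSup_abs_mul_of_abs_le {ι : Type*} [Nonempty ι] {R : ℝ → ι → ℝ} {C : ℝ}
    (h : ∀ w, 0 < w → ∀ i, |R w i| ≤ C / w ^ 2) :
    Tendsto (fun w => ⨆ i, |w * R w i|) atTop (𝓝 0) := by
  refine squeeze_zero' (Eventually.of_forall fun w => Real.iSup_nonneg fun i => abs_nonneg _)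
    ((eventually_gt_atTop 0).mono fun w hw => ciSup_le fun i => ?_)
    ((tendsto_const_nhds (x := C)).div_atTop tendsto_id)
  calc |w * R w i| = w * |R w i| := by rw [abs_mul, abs_of_pos hw]
    _ ≤ w * (C / w ^ 2) := by gcongr; exact h w hw i
    _ = C / id w := by rw [id]; field_simp

section Series

variable {χ : ℝ × ℝ → ℝ} {w x y : ℝ}

theorem Gop_eq_tsum {g : ℝ × ℝ → ℝ}
    (h : Summable fun kj : ℤ × ℤ => χ (w * x - kj.1, w * y - kj.2) * g (kj.1 / w, kj.2 / w)) :
    Gop χ w g x y = ∑' kj : ℤ × ℤ, χ (w * x - kj.1, w * y - kj.2) * g (kj.1 / w, kj.2 / w) :=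
  h.tsum_prod.symm

theorem Sop_eq_tsum {f : ℝ × ℝ → ℝ}
    (h : Summable fun kj : ℤ × ℤ => χ (w * x - kj.1, w * y - kj.2) *
      (w ^ 2 * ∫ u in (kj.1 : ℝ) / w..(kj.1 + 1) / w, ∫ v in (kj.2 : ℝ) / w..(kj.2 + 1) / w,
        f (u, v))) :
    Sop χ w f x y = ∑' kj : ℤ × ℤ, χ (w * x - kj.1, w * y - kj.2) *
      (w ^ 2 * ∫ u in (kj.1 : ℝ) / w..(kj.1 + 1) / w, ∫ v in (kj.2 : ℝ) / w..(kj.2 + 1) / w,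
        f (u, v)) :=
  h.tsum_prod.symm

end Series

-- The remainder `R₂^w` of the paper.
noncomputable def kantorovichRemainder (χ : ℝ × ℝ → ℝ) (w : ℝ) (f : ℝ × ℝ → ℝ) (x y : ℝ) : ℝ :=
  Sop χ w f x y - Gop χ w f x y - 1 / (2 * w) * Gop χ w (pd f 1 0) x y -
    1 / (2 * w) * Gop χ w (pd f 0 1) x y

theorem summable_and_abs_kantorovichRemainder_le {χ f : ℝ × ℝ → ℝ} {M₁ M₂ M₃ M w : ℝ}
    (h00 : absMoment χ 0 0 < ⊤) (h20 : absMoment χ 2 0 < ⊤) (h02 : absMoment χ 0 2 < ⊤)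
    (hf : ContDiff ℝ 2 f) (hb1 : ∀ z, |pd f 2 0 z| ≤ M₁) (hb2 : ∀ z, |pd f 1 1 z| ≤ M₂)
    (hb3 : ∀ z, |pd f 0 2 z| ≤ M₃) (h₁ : M₁ ≤ M) (h₂ : M₂ ≤ M) (h₃ : M₃ ≤ M) (hw : 0 < w)
    (x y : ℝ) :
    (Summable fun kj : ℤ × ℤ => |χ (w * x - kj.1, w * y - kj.2) *
      (w ^ 2 * ∫ u in (kj.1 : ℝ) / w..(kj.1 + 1) / w, ∫ v in (kj.2 : ℝ) / w..(kj.2 + 1) / w,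
        f (u, v))|) ∧
    |kantorovichRemainder χ w f x y| ≤ 7 * M / (12 * w ^ 2) * (absMoment χ 0 0).toReal := by
  have hχ : Summable fun kj : ℤ × ℤ => |χ (w * x - kj.1, w * y - kj.2)| := by
    simpa using summable_of_absMoment_lt_top h00 (w * x) (w * y)
  have hχ_le : ∑' kj : ℤ × ℤ, |χ (w * x - kj.1, w * y - kj.2)| ≤ (absMoment χ 0 0).toReal := by
    simpa using tsum_le_absMoment h00 (w * x) (w * y)
  have hsF := (hasQuadraticGrowth_of_bounded_second_partials hf hb1 hb2 hb3).summable_abs_mul_sample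
    h00 h20 h02 hw x y
  have hsX := (hasQuadraticGrowth_pd_one_zero hf hb1 hb2 hb3).summable_abs_mul_sample
    h00 h20 h02 hw x y
  have hsY := (hasQuadraticGrowth_pd_zero_one hf hb1 hb2 hb3).summable_abs_mul_sample
    h00 h20 h02 hw x y
  obtain ⟨hsS, hR⟩ := summable_abs_mul_and_abs_tsum_sub_le hχ hsF hsX hsY fun kj =>
    abs_kantorovich_mean_sub_le hf hb1 hb2 hb3 h₁ h₂ h₃ hw kj.1 kj.2
  refine ⟨hsS, ?_⟩
  rw [kantorovichRemainder, Sop_eq_tsum hsS.of_abs, Gop_eq_tsum hsF.of_abs,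
    Gop_eq_tsum hsX.of_abs, Gop_eq_tsum hsY.of_abs]
  have hε : 0 ≤ 7 * M / (12 * w ^ 2) := by
    have := (abs_nonneg _).trans ((hb1 0).trans h₁)
    positivity
  exact hR.trans (mul_le_mul_of_nonneg_left hχ_le hε)

theorem statement2_general (χ : ℝ × ℝ → ℝ)
    (hM2 : Mmoment χ 2 < ⊤) (hM0 : absMoment χ 0 0 < ⊤)
    (f : ℝ × ℝ → ℝ) (hf : ContDiff ℝ 2 f)
    (M₁ M₂ M₃ M : ℝ)
    (hb1 : ∀ z, |pd f 2 0 z| ≤ M₁) (hb2 : ∀ z, |pd f 1 1 z| ≤ M₂)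
    (hb3 : ∀ z, |pd f 0 2 z| ≤ M₃)
    (hM : M = max M₁ (max M₂ M₃)) :
    (∀ w : ℝ, 0 < w → ∀ x y : ℝ,
      (Summable (fun kj : ℤ × ℤ =>
        |χ (w * x - (kj.1 : ℝ), w * y - (kj.2 : ℝ)) *
          (w ^ 2 * ∫ u in ((kj.1 : ℝ) / w)..(((kj.1 : ℝ) + 1) / w),
            ∫ v in ((kj.2 : ℝ) / w)..(((kj.2 : ℝ) + 1) / w), f (u, v))|)) ∧
      (Summable (fun kj : ℤ × ℤ =>
        |χ (w * x - (kj.1 : ℝ), w * y - (kj.2 : ℝ)) * f ((kj.1 : ℝ) / w, (kj.2 : ℝ) / w)|)) ∧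
      (Summable (fun kj : ℤ × ℤ =>
        |χ (w * x - (kj.1 : ℝ), w * y - (kj.2 : ℝ)) * pd f 1 0 ((kj.1 : ℝ) / w, (kj.2 : ℝ) / w)|)) ∧
      (Summable (fun kj : ℤ × ℤ =>
        |χ (w * x - (kj.1 : ℝ), w * y - (kj.2 : ℝ)) * pd f 0 1 ((kj.1 : ℝ) / w, (kj.2 : ℝ) / w)|)) ∧
      |Sop χ w f x y - Gop χ w f x y - (1 / (2 * w)) * Gop χ w (pd f 1 0) x y -
          (1 / (2 * w)) * Gop χ w (pd f 0 1) x y| ≤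
        (7 * M / (12 * w ^ 2)) * (absMoment χ 0 0).toReal) ∧
    Tendsto (fun w : ℝ => ⨆ p : ℝ × ℝ,
      |w * (Sop χ w f p.1 p.2 - Gop χ w f p.1 p.2 - (1 / (2 * w)) * Gop χ w (pd f 1 0) p.1 p.2 -
        (1 / (2 * w)) * Gop χ w (pd f 0 1) p.1 p.2)|) atTop (nhds 0) := by
  have h20 := (absMoment_le_Mmoment (χ := χ) (p₁ := 2) (p₂ := 0) rfl).trans_lt hM2
  have h02 := (absMoment_le_Mmoment (χ := χ) (p₁ := 0) (p₂ := 2) rfl).trans_lt hM2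
  have h₁ : M₁ ≤ M := by simp [hM]
  have h₂ : M₂ ≤ M := by simp [hM]
  have h₃ : M₃ ≤ M := by simp [hM]
  have hrem := fun (w : ℝ) (hw : 0 < w) (x y : ℝ) => summable_and_abs_kantorovichRemainder_le
    hM0 h20 h02 hf hb1 hb2 hb3 h₁ h₂ h₃ hw x y
  refine ⟨fun w hw x y => ⟨(hrem w hw x y).1, ?_, ?_, ?_, (hrem w hw x y).2⟩,
    tendsto_iSup_abs_mul_of_abs_le (C := 7 * M * (absMoment χ 0 0).toReal / 12)
      fun w hw p => (hrem w hw p.1 p.2).2.trans_eq (by ring)⟩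
  · exact (hasQuadraticGrowth_of_bounded_second_partials hf hb1 hb2 hb3).summable_abs_mul_sample
      hM0 h20 h02 hw x y
  · exact (hasQuadraticGrowth_pd_one_zero hf hb1 hb2 hb3).summable_abs_mul_sample
      hM0 h20 h02 hw x y
  · exact (hasQuadraticGrowth_pd_zero_one hf hb1 hb2 hb3).summable_abs_mul_sample
      hM0 h20 h02 hw x y

/-- representation formula relating the Kantorovich sampling series with the
generalized sampling series, absolute convergence of the series involved, the bound on the
remainder, and the uniform vanishing of w·R₂^w as w → ∞. -/
theorem statement2 (χ : ℝ × ℝ → ℝ) (hχc : Continuous χ) (hχb : ∃ C : ℝ, ∀ p, |χ p| ≤ C)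
    (hpart : PartitionOfUnity2 χ)
    (hM2 : Mmoment χ 2 < ⊤) (hM0 : absMoment χ 0 0 < ⊤)
    (f : ℝ × ℝ → ℝ) (hf : ContDiff ℝ 2 f)
    (M₁ M₂ M₃ M : ℝ)
    (hb1 : ∀ z, |pd f 2 0 z| ≤ M₁) (hb2 : ∀ z, |pd f 1 1 z| ≤ M₂)
    (hb3 : ∀ z, |pd f 0 2 z| ≤ M₃)
    (hM : M = max M₁ (max M₂ M₃)) :
    (∀ w : ℝ, 0 < w → ∀ x y : ℝ,
      (Summable (fun kj : ℤ × ℤ =>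
        |χ (w * x - (kj.1 : ℝ), w * y - (kj.2 : ℝ)) *
          (w ^ 2 * ∫ u in ((kj.1 : ℝ) / w)..(((kj.1 : ℝ) + 1) / w),
            ∫ v in ((kj.2 : ℝ) / w)..(((kj.2 : ℝ) + 1) / w), f (u, v))|)) ∧
      (Summable (fun kj : ℤ × ℤ =>
        |χ (w * x - (kj.1 : ℝ), w * y - (kj.2 : ℝ)) * f ((kj.1 : ℝ) / w, (kj.2 : ℝ) / w)|)) ∧
      (Summable (fun kj : ℤ × ℤ =>
        |χ (w * x - (kj.1 : ℝ), w * y - (kj.2 : ℝ)) * pd f 1 0 ((kj.1 : ℝ) / w, (kj.2 : ℝ) / w)|)) ∧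
      (Summable (fun kj : ℤ × ℤ =>
        |χ (w * x - (kj.1 : ℝ), w * y - (kj.2 : ℝ)) * pd f 0 1 ((kj.1 : ℝ) / w, (kj.2 : ℝ) / w)|)) ∧
      |Sop χ w f x y - Gop χ w f x y - (1 / (2 * w)) * Gop χ w (pd f 1 0) x y -
          (1 / (2 * w)) * Gop χ w (pd f 0 1) x y| ≤
        (7 * M / (12 * w ^ 2)) * (absMoment χ 0 0).toReal) ∧
    Tendsto (fun w : ℝ => ⨆ p : ℝ × ℝ,
      |w * (Sop χ w f p.1 p.2 - Gop χ w f p.1 p.2 - (1 / (2 * w)) * Gop χ w (pd f 1 0) p.1 p.2 -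
        (1 / (2 * w)) * Gop χ w (pd f 0 1) p.1 p.2)|) atTop (nhds 0) :=
  statement2_general χ hM2 hM0 f hf M₁ M₂ M₃ M hb1 hb2 hb3 hM
end

section
/- Let χ satisfy M_{(1,0)}(χ) < ∞, M_{(0,1)}(χ) < ∞ and M_{(1,1)}(χ) < ∞. Then for every w > 0 and every (x,y) ∈ ℝ²: (i) Σ_{k∈ℤ} Σ_{j∈ℤ} |χ(wx−k, wy−j)| · w² ∫_{k/w}^{(k+1)/w} ∫_{j/w}^{(j+1)/w} |u−x| du dv ≤ (1/(2w)) [M_{(0,0)}(χ) + 2 M_{(1,0)}(χ)]; (ii) Σ_{k∈ℤ} Σ_{j∈ℤ} |χ(wx−k, wy−j)| · w² ∫_{k/w}^{(k+1)/w} ∫_{j/w}^{(j+1)/w} |v−y| du dv ≤ (1/(2w)) [M_{(0,0)}(χ) + 2 M_{(0,1)}(χ)]; (iii) Σ_{k∈ℤ} Σ_{j∈ℤ} |χ(wx−k, wy−j)| · w² ∫_{k/w}^{(k+1)/w} ∫_{j/w}^{(j+1)/w} |u−x||v−y| du dv ≤ (1/(4w²)) [M_{(0,0)}(χ) + 2 M_{(1,0)}(χ)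 + 2 M_{(0,1)}(χ) + 4 M_{(1,1)}(χ)]. -/
/-!
On the cell `[k/w, (k+1)/w]` one has `|u - x| ≤ (u - k/w) + |k/w - x|`, so the normalised integral
`w ∫ |u - x|` is at most `(1/2 + |w x - k|) / w`. The double integrals over a cell factor into such
one-dimensional integrals, and multiplying out `(1/2 + |w x - k|)(1/2 + |w y - j|)` expresses each bound
through the summands of the absolute moments `M₀₀, M₁₀, M₀₁, M₁₁` at the point `(w x, w y)`.
In `ℝ≥0∞` the double sums of nonnegative terms split additively and are bounded by the suprema
termwise.
-/

open MeasureTheory Filter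
open scoped ENNReal BigOperators Topology

abbrev absMomentTerm (χ : ℝ × ℝ → ℝ) (p₁ p₂ : ℕ) (u v : ℝ) (k j : ℤ) : ℝ :=
  |χ (u - k, v - j)| * |u - k| ^ p₁ * |v - j| ^ p₂

lemma integral_abs_sub_le (x : ℝ) {a b : ℝ} (hab : a ≤ b) :
    ∫ u in a..b, |u - x| ≤ (b - a) * ((b - a) / 2 + |a - x|) := by
  calc ∫ u in a..b, |u - x| ≤ ∫ u in a..b, (u - a + |a - x|) := by
        refine intervalIntegral.integral_mono_on hab
          ((by fun_prop : Continuous _).intervalIntegrable _ _)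
          ((by fun_prop : Continuous _).intervalIntegrable _ _) fun u hu => ?_
        calc |u - x| = |(u - a) + (a - x)| := by ring_nf
          _ ≤ |u - a| + |a - x| := abs_add_le _ _
          _ = u - a + |a - x| := by rw [abs_of_nonneg (by linarith [hu.1])]
    _ = (b - a) * ((b - a) / 2 + |a - x|) := by
        simp only [intervalIntegral.integral_comp_sub_right (fun u => u + |a - x|), sub_self,
          intervalIntegral.integral_add intervalIntegral.intervalIntegrable_id intervalIntegrable_const, integral_id,
          intervalIntegral.integral_const, smul_eq_mul]
        ring

lemma mul_integral_abs_sub_le {w : ℝ} (hw : 0 < w) (x k : ℝ) :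
    w * ∫ u in k / w..(k + 1) / w, |u - x| ≤ (1 / 2 + |w * x - k|) / w := by
  have hlen : (k + 1) / w - k / w = 1 / w := by field_simp; ring
  have hdist : |k / w - x| = |w * x - k| / w := by
    rw [abs_sub_comm, show x - k / w = (w * x - k) / w by field_simp, abs_div, abs_of_pos hw]
  have h := integral_abs_sub_le x (a := k / w) (b := (k + 1) / w) (by gcongr; linarith)
  rw [hlen, hdist] at h
  calc w * ∫ u in k / w..(k + 1) / w, |u - x|
      ≤ w * (1 / w * (1 / w / 2 + |w * x - k| / w)) := by gcongr
    _ = (1 / 2 + |w * x - k|) / w := by field_simp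

lemma integral_const_cell {w : ℝ} (hw : w ≠ 0) (k c : ℝ) :
    ∫ _ in k / w..(k + 1) / w, c = c / w := by
  rw [intervalIntegral.integral_const, smul_eq_mul]
  field_simp
  ring

lemma tsum_ofReal_absMomentTerm_le (χ : ℝ × ℝ → ℝ) (p₁ p₂ : ℕ) (u v : ℝ) :
    ∑' k : ℤ, ∑' j : ℤ, ENNReal.ofReal (absMomentTerm χ p₁ p₂ u v k j) ≤ absMoment χ p₁ p₂ :=
  le_iSup₂ (f := fun u v => ∑' k : ℤ, ∑' j : ℤ, ENNReal.ofReal (absMomentTerm χ p₁ p₂ u v k j)) u v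

section Summation

variable {χ : ℝ × ℝ → ℝ} {u v c : ℝ} {F : ℤ → ℤ → ℝ}

lemma tsum_ofReal_le_absMoment_zero_add_two_mul (p₁ p₂ : ℕ) (hc : 0 ≤ c)
    (hF : ∀ k j, F k j ≤
      c * (absMomentTerm χ 0 0 u v k j + 2 * absMomentTerm χ p₁ p₂ u v k j)) :
    ∑' k : ℤ, ∑' j : ℤ, ENNReal.ofReal (F k j) ≤
      ENNReal.ofReal c * (absMoment χ 0 0 + 2 * absMoment χ p₁ p₂) := by
  calc ∑' k : ℤ, ∑' j : ℤ, ENNReal.ofReal (F k j)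
      ≤ ∑' k : ℤ, ∑' j : ℤ, ENNReal.ofReal c * (ENNReal.ofReal (absMomentTerm χ 0 0 u v k j) +
          2 * ENNReal.ofReal (absMomentTerm χ p₁ p₂ u v k j)) :=
        ENNReal.tsum_le_tsum fun k => ENNReal.tsum_le_tsum fun j =>
          (ENNReal.ofReal_le_ofReal (hF k j)).trans_eq <| by
            simp (disch := positivity) only [ENNReal.ofReal_mul, ENNReal.ofReal_add,
              ENNReal.ofReal_ofNat]
    _ = ENNReal.ofReal c * (∑' k : ℤ, ∑' j : ℤ, ENNReal.ofReal (absMomentTerm χ 0 0 u v k j) +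
          2 * ∑' k : ℤ, ∑' j : ℤ, ENNReal.ofReal (absMomentTerm χ p₁ p₂ u v k j)) := by
        simp only [ENNReal.tsum_add, ENNReal.tsum_mul_left]
    _ ≤ ENNReal.ofReal c * (absMoment χ 0 0 + 2 * absMoment χ p₁ p₂) := by
        gcongr <;> exact tsum_ofReal_absMomentTerm_le χ _ _ u v

lemma tsum_ofReal_le_absMoment_first_order (hc : 0 ≤ c)
    (hF : ∀ k j, F k j ≤
      c * (absMomentTerm χ 0 0 u v k j + 2 * absMomentTerm χ 1 0 u v k j +
        2 * absMomentTerm χ 0 1 u v k j + 4 * absMomentTerm χ 1 1 u v k j)) :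
    ∑' k : ℤ, ∑' j : ℤ, ENNReal.ofReal (F k j) ≤
      ENNReal.ofReal c *
        (absMoment χ 0 0 + 2 * absMoment χ 1 0 + 2 * absMoment χ 0 1 + 4 * absMoment χ 1 1) := by
  calc ∑' k : ℤ, ∑' j : ℤ, ENNReal.ofReal (F k j)
      ≤ ∑' k : ℤ, ∑' j : ℤ, ENNReal.ofReal c * (ENNReal.ofReal (absMomentTerm χ 0 0 u v k j) +
          2 * ENNReal.ofReal (absMomentTerm χ 1 0 u v k j) +
          2 * ENNReal.ofReal (absMomentTerm χ 0 1 u v k j) +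
          4 * ENNReal.ofReal (absMomentTerm χ 1 1 u v k j)) :=
        ENNReal.tsum_le_tsum fun k => ENNReal.tsum_le_tsum fun j =>
          (ENNReal.ofReal_le_ofReal (hF k j)).trans_eq <| by
            simp (disch := positivity) only [ENNReal.ofReal_mul, ENNReal.ofReal_add,
              ENNReal.ofReal_ofNat]
    _ = ENNReal.ofReal c * (∑' k : ℤ, ∑' j : ℤ, ENNReal.ofReal (absMomentTerm χ 0 0 u v k j) +
          2 * ∑' k : ℤ, ∑' j : ℤ, ENNReal.ofReal (absMomentTerm χ 1 0 u v k j) +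
          2 * ∑' k : ℤ, ∑' j : ℤ, ENNReal.ofReal (absMomentTerm χ 0 1 u v k j) +
          4 * ∑' k : ℤ, ∑' j : ℤ, ENNReal.ofReal (absMomentTerm χ 1 1 u v k j)) := by
        simp only [ENNReal.tsum_add, ENNReal.tsum_mul_left]
    _ ≤ _ := by gcongr <;> exact tsum_ofReal_absMomentTerm_le χ _ _ u v

end Summation

section CellBounds

variable (χ : ℝ × ℝ → ℝ) {w : ℝ} (hw : 0 < w) (x y : ℝ) (k j : ℤ)
include hw

lemma abs_mul_cell_integral_abs_sub_fst_le :
    |χ (w * x - k, w * y - j)| *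
        (w ^ 2 * ∫ u in (k : ℝ) / w..((k : ℝ) + 1) / w, ∫ _ in (j : ℝ) / w..((j : ℝ) + 1) / w,
          |u - x|) ≤
      1 / (2 * w) * (absMomentTerm χ 0 0 (w * x) (w * y) k j +
        2 * absMomentTerm χ 1 0 (w * x) (w * y) k j) := by
  have hI : w ^ 2 * ∫ u in (k : ℝ) / w..((k : ℝ) + 1) / w,
      ∫ _ in (j : ℝ) / w..((j : ℝ) + 1) / w, |u - x| =
        w * ∫ u in (k : ℝ) / w..((k : ℝ) + 1) / w, |u - x| := by
    simp only [integral_const_cell hw.ne', intervalIntegral.integral_div]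
    field_simp
  rw [hI]
  calc _ ≤ |χ (w * x - k, w * y - j)| * ((1 / 2 + |w * x - k|) / w) := by
        gcongr
        exact mul_integral_abs_sub_le hw x k
    _ = _ := by field_simp

lemma abs_mul_cell_integral_abs_sub_snd_le :
    |χ (w * x - k, w * y - j)| *
        (w ^ 2 * ∫ _ in (k : ℝ) / w..((k : ℝ) + 1) / w, ∫ v in (j : ℝ) / w..((j : ℝ) + 1) / w,
          |v - y|) ≤
      1 / (2 * w) * (absMomentTerm χ 0 0 (w * x) (w * y) k j +
        2 * absMomentTerm χ 0 1 (w * x) (w * y) k j) := by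
  rw [integral_const_cell hw.ne']
  calc _ ≤ |χ (w * x - k, w * y - j)| * ((1 / 2 + |w * y - j|) / w) := by
        gcongr
        refine (le_of_eq ?_).trans (mul_integral_abs_sub_le hw y j)
        field_simp
    _ = _ := by field_simp

lemma abs_mul_cell_integral_abs_sub_mul_abs_sub_le :
    |χ (w * x - k, w * y - j)| *
        (w ^ 2 * ∫ u in (k : ℝ) / w..((k : ℝ) + 1) / w, ∫ v in (j : ℝ) / w..((j : ℝ) + 1) / w,
          |u - x| * |v - y|) ≤
      1 / (4 * w ^ 2) * (absMomentTerm χ 0 0 (w * x) (w * y) k j +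
        2 * absMomentTerm χ 1 0 (w * x) (w * y) k j + 2 * absMomentTerm χ 0 1 (w * x) (w * y) k j +
        4 * absMomentTerm χ 1 1 (w * x) (w * y) k j) := by
  have hI : w ^ 2 * ∫ u in (k : ℝ) / w..((k : ℝ) + 1) / w,
      ∫ v in (j : ℝ) / w..((j : ℝ) + 1) / w, |u - x| * |v - y| =
        (w * ∫ u in (k : ℝ) / w..((k : ℝ) + 1) / w, |u - x|) *
          (w * ∫ v in (j : ℝ) / w..((j : ℝ) + 1) / w, |v - y|) := by
    simp only [intervalIntegral.integral_const_mul, intervalIntegral.integral_mul_const]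
    ring
  rw [hI]
  calc _ ≤ |χ (w * x - k, w * y - j)| *
        ((1 / 2 + |w * x - k|) / w * ((1 / 2 + |w * y - j|) / w)) := by
        gcongr
        · exact mul_nonneg hw.le <|
            intervalIntegral.integral_nonneg (by gcongr; linarith) fun _ _ => abs_nonneg _
        · exact mul_integral_abs_sub_le hw x k
        · exact mul_integral_abs_sub_le hw y j
    _ = _ := by field_simp; ring

end CellBounds

theorem statement6_general (χ : ℝ × ℝ → ℝ) (w : ℝ) (hw : 0 < w) (x y : ℝ) :
    (∑' k : ℤ, ∑' j : ℤ, ENNReal.ofReal (|χ (w * x - (k : ℝ), w * y - (j : ℝ))| *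
        (w ^ 2 * ∫ u in ((k : ℝ) / w)..(((k : ℝ) + 1) / w),
          ∫ v in ((j : ℝ) / w)..(((j : ℝ) + 1) / w), |u - x|)) ≤
      ENNReal.ofReal (1 / (2 * w)) * (absMoment χ 0 0 + 2 * absMoment χ 1 0)) ∧
    (∑' k : ℤ, ∑' j : ℤ, ENNReal.ofReal (|χ (w * x - (k : ℝ), w * y - (j : ℝ))| *
        (w ^ 2 * ∫ u in ((k : ℝ) / w)..(((k : ℝ) + 1) / w),
          ∫ v in ((j : ℝ) / w)..(((j : ℝ) + 1) / w), |v - y|)) ≤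
      ENNReal.ofReal (1 / (2 * w)) * (absMoment χ 0 0 + 2 * absMoment χ 0 1)) ∧
    (∑' k : ℤ, ∑' j : ℤ, ENNReal.ofReal (|χ (w * x - (k : ℝ), w * y - (j : ℝ))| *
        (w ^ 2 * ∫ u in ((k : ℝ) / w)..(((k : ℝ) + 1) / w),
          ∫ v in ((j : ℝ) / w)..(((j : ℝ) + 1) / w), |u - x| * |v - y|)) ≤
      ENNReal.ofReal (1 / (4 * w ^ 2)) *
        (absMoment χ 0 0 + 2 * absMoment χ 1 0 + 2 * absMoment χ 0 1 +
          4 * absMoment χ 1 1)) :=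
  ⟨tsum_ofReal_le_absMoment_zero_add_two_mul 1 0 (by positivity)
      (abs_mul_cell_integral_abs_sub_fst_le χ hw x y),
    tsum_ofReal_le_absMoment_zero_add_two_mul 0 1 (by positivity)
      (abs_mul_cell_integral_abs_sub_snd_le χ hw x y),
    tsum_ofReal_le_absMoment_first_order (by positivity)
      (abs_mul_cell_integral_abs_sub_mul_abs_sub_le χ hw x y)⟩

/-- first moment estimates for the Kantorovich sampling operator. -/
theorem statement6 (χ : ℝ × ℝ → ℝ) (hχc : Continuous χ) (hχb : ∃ C : ℝ, ∀ p, |χ p| ≤ C)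
    (hpart : PartitionOfUnity2 χ)
    (h10 : absMoment χ 1 0 < ⊤) (h01 : absMoment χ 0 1 < ⊤) (h11 : absMoment χ 1 1 < ⊤)
    (w : ℝ) (hw : 0 < w) (x y : ℝ) :
    (∑' k : ℤ, ∑' j : ℤ, ENNReal.ofReal (|χ (w * x - (k : ℝ), w * y - (j : ℝ))| *
        (w ^ 2 * ∫ u in ((k : ℝ) / w)..(((k : ℝ) + 1) / w),
          ∫ v in ((j : ℝ) / w)..(((j : ℝ) + 1) / w), |u - x|)) ≤
      ENNReal.ofReal (1 / (2 * w)) * (absMoment χ 0 0 + 2 * absMoment χ 1 0)) ∧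
    (∑' k : ℤ, ∑' j : ℤ, ENNReal.ofReal (|χ (w * x - (k : ℝ), w * y - (j : ℝ))| *
        (w ^ 2 * ∫ u in ((k : ℝ) / w)..(((k : ℝ) + 1) / w),
          ∫ v in ((j : ℝ) / w)..(((j : ℝ) + 1) / w), |v - y|)) ≤
      ENNReal.ofReal (1 / (2 * w)) * (absMoment χ 0 0 + 2 * absMoment χ 0 1)) ∧
    (∑' k : ℤ, ∑' j : ℤ, ENNReal.ofReal (|χ (w * x - (k : ℝ), w * y - (j : ℝ))| *
        (w ^ 2 * ∫ u in ((k : ℝ) / w)..(((k : ℝ) + 1) / w),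
          ∫ v in ((j : ℝ) / w)..(((j : ℝ) + 1) / w), |u - x| * |v - y|)) ≤
      ENNReal.ofReal (1 / (4 * w ^ 2)) *
        (absMoment χ 0 0 + 2 * absMoment χ 1 0 + 2 * absMoment χ 0 1 +
          4 * absMoment χ 1 1)) :=
  statement6_general χ w hw x y
end

section
/- Let χ satisfy M_{(p₁,p₂)}(χ) < ∞ for all p₁, p₂ ≤ 2. Then for every w > 0 and every (x,y) ∈ ℝ², writing T(g) := Σ_{k∈ℤ} Σ_{j∈ℤ} |χ(wx−k, wy−j)| · w² ∫_{k/w}^{(k+1)/w} ∫_{j/w}^{(j+1)/w} g(u,v) du dv, one has: (i) T((u−x)²) ≤ (1/(3w²)) [M_{(0,0)}(χ) + 3 M_{(2,0)}(χ) + 3 M_{(1,0)}(χ)]; (ii) T((v−y)²) ≤ (1/(3w²)) [M_{(0,0)}(χ) + 3 M_{(0,2)}(χ) + 3 M_{(0,1)}(χ)]; (iii) T((u−x)²|v−y|) ≤ (1/(6w³)) [M_{(0,0)}(χ) + 3 M_{(2,0)}(χ) + 3 M_{(1,0)}(χ) + 2 M_{(0,1)}(χ) + 6 M_{(2,1)}(χ)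 + 6 M_{(1,1)}(χ)]; (iv) T(|u−x|(v−y)²) ≤ (1/(6w³)) [M_{(0,0)}(χ) + 3 M_{(0,2)}(χ) + 3 M_{(0,1)}(χ) + 2 M_{(1,0)}(χ) + 6 M_{(1,2)}(χ) + 6 M_{(1,1)}(χ)]; (v) T((u−x)²(v−y)²) ≤ (1/(9w⁴)) [M_{(0,0)}(χ) + 3 M_{(2,0)}(χ) + 3 M_{(0,2)}(χ) + 3 M_{(0,1)}(χ) + 3 M_{(1,0)}(χ) + 9 M_{(2,2)}(χ) + 9 M_{(1,2)}(χ) + 9 M_{(2,1)}(χ) + 9 M_{(1,1)}(χ)]. -/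
open MeasureTheory Filter
open scoped ENNReal BigOperators Topology

/-- The auxiliary absolute Kantorovich-type sum T used in STATEMENT 8. -/
noncomputable def Tsum (χ : ℝ × ℝ → ℝ) (w x y : ℝ) (g : ℝ → ℝ → ℝ) : ℝ≥0∞ :=
  ∑' k : ℤ, ∑' j : ℤ, ENNReal.ofReal (|χ (w * x - (k : ℝ), w * y - (j : ℝ))| *
    (w ^ 2 * ∫ u in ((k : ℝ) / w)..(((k : ℝ) + 1) / w),
      ∫ v in ((j : ℝ) / w)..(((j : ℝ) + 1) / w), g u v))

/-!
The integrands are products `φ (u - x) * ψ (v - y)`, so each double integral over the cell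
`[k/w, (k+1)/w] × [j/w, (j+1)/w]` factors into two one-dimensional ones. With `s = |w x - k|`, the
rescaled one-dimensional integrals of `1`, `|u - x|` and `(u - x)²` are at most `1`,
`(1 + 2 s) / (2 w)` and `(1 + 3 s + 3 s²) / (3 w²)`. Multiplying out and summing over `(k, j)`,
each monomial `s^a t^b` contributes at most the absolute moment `M_{(a,b)}(χ)`.
-/

namespace KantorovichMoments

variable {w : ℝ}

lemma cell_length (w : ℝ) (k : ℤ) : ((k : ℝ) + 1) / w - (k : ℝ) / w = 1 / w := by
  rw [add_div]; ring

lemma cell_left_le_right (hw : 0 < w) (k : ℤ) : (k : ℝ) / w ≤ ((k : ℝ) + 1) / w := by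
  gcongr; linarith

lemma mul_integral_cell_one_le (hw : 0 < w) (x : ℝ) (k : ℤ) :
    w * ∫ _ in (k : ℝ) / w..((k : ℝ) + 1) / w, (1 : ℝ)
      ≤ 1 * ∑ a : Fin 1, ((![1] a : ℕ) : ℝ) * |w * x - k| ^ (a : ℕ) := by
  rw [intervalIntegral.integral_const, cell_length, smul_eq_mul, mul_one,
    mul_one_div_cancel hw.ne']
  simp

lemma mul_integral_cell_sq (hw : 0 < w) (x : ℝ) (k : ℤ) :
    w * ∫ u in (k : ℝ) / w..((k : ℝ) + 1) / w, (u - x) ^ 2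
      = ((w * x - k) ^ 2 - (w * x - k) + 1 / 3) / w ^ 2 := by
  have := hw.ne'
  rw [intervalIntegral.integral_comp_sub_right (· ^ 2) x, integral_pow]
  field_simp
  simp only [div_pow]
  field_simp
  ring

lemma mul_integral_cell_sq_le (hw : 0 < w) (x : ℝ) (k : ℤ) :
    w * ∫ u in (k : ℝ) / w..((k : ℝ) + 1) / w, (u - x) ^ 2
      ≤ 1 / (3 * w ^ 2) * ∑ a : Fin 3, ((![1, 3, 3] a : ℕ) : ℝ) * |w * x - k| ^ (a : ℕ) := by
  have hs : -(w * x - k) ≤ |w * x - k| := neg_le_abs _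
  rw [mul_integral_cell_sq hw, ← sq_abs (w * x - k)]
  simp only [Fin.sum_univ_succ, Fin.sum_univ_zero, Matrix.cons_val_zero, Matrix.cons_val_succ,
    Fin.val_zero, Fin.val_succ, zero_add, one_add_one_eq_two, Nat.cast_one, Nat.cast_ofNat,
    add_zero]
  rw [div_le_iff₀ (by positivity)]
  field_simp
  nlinarith

lemma mul_integral_cell_abs_le (hw : 0 < w) (x : ℝ) (k : ℤ) :
    w * ∫ u in (k : ℝ) / w..((k : ℝ) + 1) / w, |u - x|
      ≤ 1 / (2 * w) * ∑ a : Fin 2, ((![1, 2] a : ℕ) : ℝ) * |w * x - k| ^ (a : ℕ) := by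
  have hmono : ∫ u in (k : ℝ) / w..((k : ℝ) + 1) / w, |u - x|
      ≤ ∫ u in (k : ℝ) / w..((k : ℝ) + 1) / w, ((u - k / w) + |w * x - k| / w) := by
    refine intervalIntegral.integral_mono_on (cell_left_le_right hw k)
      (Continuous.intervalIntegrable (by fun_prop) _ _)
      (Continuous.intervalIntegrable (by fun_prop) _ _) fun u hu => ?_
    calc |u - x| ≤ |u - k / w| + |k / w - x| := abs_sub_le _ _ _
      _ = (u - k / w) + |w * x - k| / w := by
        rw [abs_of_nonneg (by linarith [hu.1]),
          show (k : ℝ) / w - x = -((w * x - k) / w) by field_simp; ring,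
          abs_neg, abs_div, abs_of_pos hw]
  have heval : ∫ u in (k : ℝ) / w..((k : ℝ) + 1) / w, ((u - k / w) + |w * x - k| / w)
      = (1 / 2 + |w * x - k|) / w ^ 2 := by
    rw [intervalIntegral.integral_add (Continuous.intervalIntegrable (by fun_prop) _ _)
        intervalIntegrable_const,
      intervalIntegral.integral_comp_sub_right (fun t => t), integral_id,
      intervalIntegral.integral_const, sub_self, cell_length, smul_eq_mul]
    have := hw.ne'
    field_simp
    ring
  calc w * ∫ u in (k : ℝ) / w..((k : ℝ) + 1) / w, |u - x|
      ≤ w * ((1 / 2 + |w * x - k|) / w ^ 2) := by rw [← heval]; gcongr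
    _ = _ := by
      simp only [Fin.sum_univ_succ, Fin.sum_univ_zero, Matrix.cons_val_zero, Matrix.cons_val_succ,
        Fin.val_zero, Fin.val_succ, zero_add, Nat.cast_one, Nat.cast_ofNat, add_zero]
      field_simp

lemma integral_cell_mul (a b c d : ℝ) (f g : ℝ → ℝ) :
    ∫ u in a..b, ∫ v in c..d, f u * g v = (∫ u in a..b, f u) * ∫ v in c..d, g v := by
  simp_rw [intervalIntegral.integral_const_mul, intervalIntegral.integral_mul_const]

lemma tsum_le_absMoment (χ : ℝ × ℝ → ℝ) (X Y : ℝ) (p q : ℕ) :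
    ∑' k : ℤ, ∑' j : ℤ, ENNReal.ofReal (|χ (X - k, Y - j)| * |X - k| ^ p * |Y - j| ^ q)
      ≤ absMoment χ p q :=
  le_iSup₂ (f := fun X Y => ∑' k : ℤ, ∑' j : ℤ,
    ENNReal.ofReal (|χ (X - k, Y - j)| * |X - k| ^ p * |Y - j| ^ q)) X Y

lemma sq_mul_integral_cell_le {x y : ℝ} {φ ψ : ℝ → ℝ} (hw : 0 < w)
    (hφ₀ : ∀ t, 0 ≤ φ t) (hψ₀ : ∀ t, 0 ≤ ψ t)
    {m n : ℕ} {c : Fin m → ℕ} {d : Fin n → ℕ} {A B : ℝ} {k j : ℤ}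
    (hφ : w * ∫ u in (k : ℝ) / w..((k : ℝ) + 1) / w, φ (u - x)
      ≤ A * ∑ a, (c a : ℝ) * |w * x - k| ^ (a : ℕ))
    (hψ : w * ∫ v in (j : ℝ) / w..((j : ℝ) + 1) / w, ψ (v - y)
      ≤ B * ∑ b, (d b : ℝ) * |w * y - j| ^ (b : ℕ)) :
    w ^ 2 * ∫ u in (k : ℝ) / w..((k : ℝ) + 1) / w, ∫ v in (j : ℝ) / w..((j : ℝ) + 1) / w,
        φ (u - x) * ψ (v - y)
      ≤ A * B * ∑ a, ∑ b,
          ((c a * d b : ℕ) : ℝ) * (|w * x - k| ^ (a : ℕ) * |w * y - j| ^ (b : ℕ)) := by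
  have hφ0 : 0 ≤ w * ∫ u in (k : ℝ) / w..((k : ℝ) + 1) / w, φ (u - x) :=
    mul_nonneg hw.le (intervalIntegral.integral_nonneg (cell_left_le_right hw k) fun _ _ => hφ₀ _)
  have hψ0 : 0 ≤ w * ∫ v in (j : ℝ) / w..((j : ℝ) + 1) / w, ψ (v - y) :=
    mul_nonneg hw.le (intervalIntegral.integral_nonneg (cell_left_le_right hw j) fun _ _ => hψ₀ _)
  calc _ = (w * ∫ u in (k : ℝ) / w..((k : ℝ) + 1) / w, φ (u - x)) *
        (w * ∫ v in (j : ℝ) / w..((j : ℝ) + 1) / w, ψ (v - y)) := by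
        rw [integral_cell_mul]; ring
    _ ≤ (A * ∑ a, (c a : ℝ) * |w * x - k| ^ (a : ℕ)) *
        (B * ∑ b, (d b : ℝ) * |w * y - j| ^ (b : ℕ)) :=
      mul_le_mul hφ hψ hψ0 (hφ0.trans hφ)
    _ = _ := by
      simp_rw [mul_mul_mul_comm A, Finset.sum_mul_sum, Finset.mul_sum]
      refine Finset.sum_congr rfl fun a _ => Finset.sum_congr rfl fun b _ => ?_
      push_cast
      ring

theorem Tsum_le_of_mul_integral_cell_le (χ : ℝ × ℝ → ℝ) (hw : 0 < w) {x y : ℝ}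
    {g : ℝ → ℝ → ℝ} {φ ψ : ℝ → ℝ} (hg : ∀ u v, g u v = φ (u - x) * ψ (v - y))
    (hφ₀ : ∀ t, 0 ≤ φ t) (hψ₀ : ∀ t, 0 ≤ ψ t)
    {m n : ℕ} {c : Fin m → ℕ} {d : Fin n → ℕ} {A B : ℝ}
    (hφ : ∀ k : ℤ, w * ∫ u in (k : ℝ) / w..((k : ℝ) + 1) / w, φ (u - x)
      ≤ A * ∑ a, (c a : ℝ) * |w * x - k| ^ (a : ℕ))
    (hψ : ∀ j : ℤ, w * ∫ v in (j : ℝ) / w..((j : ℝ) + 1) / w, ψ (v - y)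
      ≤ B * ∑ b, (d b : ℝ) * |w * y - j| ^ (b : ℕ)) :
    Tsum χ w x y g
      ≤ ENNReal.ofReal (A * B) * ∑ a, ∑ b, (c a * d b : ℝ≥0∞) * absMoment χ a b := by
  have hterm (k j : ℤ) : ENNReal.ofReal (|χ (w * x - k, w * y - j)| *
      (w ^ 2 * ∫ u in (k : ℝ) / w..((k : ℝ) + 1) / w, ∫ v in (j : ℝ) / w..((j : ℝ) + 1) / w, g u v))
      ≤ ENNReal.ofReal (A * B) * ∑ a, ∑ b, (c a * d b : ℝ≥0∞) * ENNReal.ofReal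
          (|χ (w * x - k, w * y - j)| * |w * x - k| ^ (a : ℕ) * |w * y - j| ^ (b : ℕ)) := by
    simp_rw [hg]
    refine (ENNReal.ofReal_le_ofReal (mul_le_mul_of_nonneg_left
      (sq_mul_integral_cell_le hw hφ₀ hψ₀ (hφ k) (hψ j)) (abs_nonneg _))).trans_eq ?_
    rw [mul_left_comm, Finset.mul_sum, ENNReal.ofReal_mul' (by positivity),
      ENNReal.ofReal_sum_of_nonneg fun a _ => by positivity]
    refine congrArg _ (Finset.sum_congr rfl fun a _ => ?_)
    rw [Finset.mul_sum, ENNReal.ofReal_sum_of_nonneg fun b _ => by positivity]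
    refine Finset.sum_congr rfl fun b _ => ?_
    rw [mul_left_comm, ENNReal.ofReal_mul (Nat.cast_nonneg _), ENNReal.ofReal_natCast, Nat.cast_mul,
      ← mul_assoc |χ (w * x - k, w * y - j)|]
  calc Tsum χ w x y g ≤ ∑' k : ℤ, ∑' j : ℤ, ENNReal.ofReal (A * B) * ∑ a, ∑ b,
        (c a * d b : ℝ≥0∞) * ENNReal.ofReal
          (|χ (w * x - k, w * y - j)| * |w * x - k| ^ (a : ℕ) * |w * y - j| ^ (b : ℕ)) :=
        ENNReal.tsum_le_tsum fun k => ENNReal.tsum_le_tsum fun j => hterm k j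
    _ = ENNReal.ofReal (A * B) * ∑ a, ∑ b, (c a * d b : ℝ≥0∞) * ∑' k : ℤ, ∑' j : ℤ,
        ENNReal.ofReal
          (|χ (w * x - k, w * y - j)| * |w * x - k| ^ (a : ℕ) * |w * y - j| ^ (b : ℕ)) := by
      simp only [ENNReal.tsum_mul_left, Summable.tsum_finsetSum fun _ _ => ENNReal.summable]
    _ ≤ _ := by gcongr with a _ b _; exact tsum_le_absMoment χ _ _ _ _

end KantorovichMoments

open KantorovichMoments in
theorem statement8_general (χ : ℝ × ℝ → ℝ)
    (w : ℝ) (hw : 0 < w) (x y : ℝ) :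
    (Tsum χ w x y (fun u _ => (u - x) ^ 2) ≤
      ENNReal.ofReal (1 / (3 * w ^ 2)) *
        (absMoment χ 0 0 + 3 * absMoment χ 2 0 + 3 * absMoment χ 1 0)) ∧
    (Tsum χ w x y (fun _ v => (v - y) ^ 2) ≤
      ENNReal.ofReal (1 / (3 * w ^ 2)) *
        (absMoment χ 0 0 + 3 * absMoment χ 0 2 + 3 * absMoment χ 0 1)) ∧
    (Tsum χ w x y (fun u v => (u - x) ^ 2 * |v - y|) ≤
      ENNReal.ofReal (1 / (6 * w ^ 3)) *
        (absMoment χ 0 0 + 3 * absMoment χ 2 0 + 3 * absMoment χ 1 0 + 2 * absMoment χ 0 1 +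
          6 * absMoment χ 2 1 + 6 * absMoment χ 1 1)) ∧
    (Tsum χ w x y (fun u v => |u - x| * (v - y) ^ 2) ≤
      ENNReal.ofReal (1 / (6 * w ^ 3)) *
        (absMoment χ 0 0 + 3 * absMoment χ 0 2 + 3 * absMoment χ 0 1 + 2 * absMoment χ 1 0 +
          6 * absMoment χ 1 2 + 6 * absMoment χ 1 1)) ∧
    (Tsum χ w x y (fun u v => (u - x) ^ 2 * (v - y) ^ 2) ≤
      ENNReal.ofReal (1 / (9 * w ^ 4)) *
        (absMoment χ 0 0 + 3 * absMoment χ 2 0 + 3 * absMoment χ 0 2 + 3 * absMoment χ 0 1 +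
          3 * absMoment χ 1 0 + 9 * absMoment χ 2 2 + 9 * absMoment χ 1 2 +
          9 * absMoment χ 2 1 + 9 * absMoment χ 1 1)) := by
  have sq₀ : ∀ t : ℝ, 0 ≤ t ^ 2 := sq_nonneg
  have one₀ : ∀ _ : ℝ, (0 : ℝ) ≤ 1 := fun _ => zero_le_one
  have h₆ : 1 / (3 * w ^ 2) * (1 / (2 * w)) = 1 / (6 * w ^ 3) := by field_simp; ring
  have h₆' : 1 / (2 * w) * (1 / (3 * w ^ 2)) = 1 / (6 * w ^ 3) := by field_simp; ring
  have h₉ : 1 / (3 * w ^ 2) * (1 / (3 * w ^ 2)) = 1 / (9 * w ^ 4) := by field_simp; ring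
  refine ⟨(Tsum_le_of_mul_integral_cell_le χ hw (fun _ _ => (mul_one _).symm) sq₀ one₀
      (mul_integral_cell_sq_le hw x) (mul_integral_cell_one_le hw y)).trans_eq ?_,
    (Tsum_le_of_mul_integral_cell_le χ hw (fun _ _ => (one_mul _).symm) one₀ sq₀
      (mul_integral_cell_one_le hw x) (mul_integral_cell_sq_le hw y)).trans_eq ?_,
    (Tsum_le_of_mul_integral_cell_le χ hw (fun _ _ => rfl) sq₀ abs_nonneg
      (mul_integral_cell_sq_le hw x) (mul_integral_cell_abs_le hw y)).trans_eq ?_,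
    (Tsum_le_of_mul_integral_cell_le χ hw (fun _ _ => rfl) abs_nonneg sq₀
      (mul_integral_cell_abs_le hw x) (mul_integral_cell_sq_le hw y)).trans_eq ?_,
    (Tsum_le_of_mul_integral_cell_le χ hw (fun _ _ => rfl) sq₀ sq₀
      (mul_integral_cell_sq_le hw x) (mul_integral_cell_sq_le hw y)).trans_eq ?_⟩ <;>
  · simp only [h₆, h₆', h₉, mul_one, one_mul, Fin.sum_univ_succ, Fin.sum_univ_zero,
      Matrix.cons_val_zero, Matrix.cons_val_succ, Fin.val_zero, Fin.val_succ, zero_add,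
      Nat.cast_one, Nat.cast_ofNat, add_zero]
    ring

/-- second moment estimates for the Kantorovich sampling operator. -/
theorem statement8 (χ : ℝ × ℝ → ℝ) (hχc : Continuous χ) (hχb : ∃ C : ℝ, ∀ p, |χ p| ≤ C)
    (hpart : PartitionOfUnity2 χ)
    (hfin : ∀ p₁ p₂ : ℕ, p₁ ≤ 2 → p₂ ≤ 2 → absMoment χ p₁ p₂ < ⊤)
    (w : ℝ) (hw : 0 < w) (x y : ℝ) :
    (Tsum χ w x y (fun u _ => (u - x) ^ 2) ≤
      ENNReal.ofReal (1 / (3 * w ^ 2)) *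
        (absMoment χ 0 0 + 3 * absMoment χ 2 0 + 3 * absMoment χ 1 0)) ∧
    (Tsum χ w x y (fun _ v => (v - y) ^ 2) ≤
      ENNReal.ofReal (1 / (3 * w ^ 2)) *
        (absMoment χ 0 0 + 3 * absMoment χ 0 2 + 3 * absMoment χ 0 1)) ∧
    (Tsum χ w x y (fun u v => (u - x) ^ 2 * |v - y|) ≤
      ENNReal.ofReal (1 / (6 * w ^ 3)) *
        (absMoment χ 0 0 + 3 * absMoment χ 2 0 + 3 * absMoment χ 1 0 + 2 * absMoment χ 0 1 +
          6 * absMoment χ 2 1 + 6 * absMoment χ 1 1)) ∧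
    (Tsum χ w x y (fun u v => |u - x| * (v - y) ^ 2) ≤
      ENNReal.ofReal (1 / (6 * w ^ 3)) *
        (absMoment χ 0 0 + 3 * absMoment χ 0 2 + 3 * absMoment χ 0 1 + 2 * absMoment χ 1 0 +
          6 * absMoment χ 1 2 + 6 * absMoment χ 1 1)) ∧
    (Tsum χ w x y (fun u v => (u - x) ^ 2 * (v - y) ^ 2) ≤
      ENNReal.ofReal (1 / (9 * w ^ 4)) *
        (absMoment χ 0 0 + 3 * absMoment χ 2 0 + 3 * absMoment χ 0 2 + 3 * absMoment χ 0 1 +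
          3 * absMoment χ 1 0 + 9 * absMoment χ 2 2 + 9 * absMoment χ 1 2 +
          9 * absMoment χ 2 1 + 9 * absMoment χ 1 1)) :=
  statement8_general χ w hw x y
end
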